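/- arXiv:0711.2555 — 11 statements merged into one kernel-verified Lean document; each statement's English description precedes it below -/
import Mathlib

section
/- Let a > 0 and P = 0, and let M₁, M₂, M₃ : ℝ → ℝ be differentiable functions satisfying the reduced Fefferman equations M₁' = -M₂·M₃/a, M₂' = M₁·a·M₃, M₃' = (1/a - a)·M₁·M₂ on all of ℝ. If the light-like condition H_a(M₁(0), M₂(0), M₃(0), 0) = (1/2)(a·M₁(0)² + (1/a)·M₂(0)²) = 0 holds, then M₁(t) = M₂(t) = 0 and M₃(t) = M₃(0) for all t; i.e., the reduced solution is constant. -/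
/-! For `P = 0` the equations conserve `a M₁² + M₂² / a`, a positive definite form in
`(M₁, M₂)`. Light-likeness makes it vanish at `t = 0`, hence for all time, so `M₁ ≡ M₂ ≡ 0`;
then `M₃' = 0` and `M₃` is constant. -/

theorem eq_of_hasDerivAt_zero {𝕜 G : Type*} [RCLike 𝕜] [NormedAddCommGroup G]
    [NormedSpace 𝕜 G] {f : 𝕜 → G} (hf : ∀ x, HasDerivAt f 0 x) (x y : 𝕜) : f x = f y :=
  is_const_of_deriv_eq_zero (fun z => (hf z).differentiableAt) (fun z => (hf z).deriv) x y

theorem eq_zero_of_mul_sq_add_inv_mul_sq_eq_zero {a x y : ℝ} (ha : 0 < a)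
    (h : a * x ^ 2 + (1 / a) * y ^ 2 = 0) : x = 0 ∧ y = 0 := by
  have hx : 0 ≤ a * x ^ 2 := by positivity
  have hy : 0 ≤ (1 / a) * y ^ 2 := by positivity
  obtain ⟨hx0, hy0⟩ := (add_eq_zero_iff_of_nonneg hx hy).1 h
  exact ⟨by simpa [ha.ne'] using hx0, by simpa [ha.ne'] using hy0⟩

theorem hasDerivAt_mul_sq_add_inv_mul_sq {a : ℝ} (ha : a ≠ 0) {M₁ M₂ : ℝ → ℝ} {m : ℝ} {t : ℝ}
    (h₁ : HasDerivAt M₁ (-(M₂ t) * (m / a)) t) (h₂ : HasDerivAt M₂ (M₁ t * (a * m)) t) :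
    HasDerivAt (fun s => a * M₁ s ^ 2 + (1 / a) * M₂ s ^ 2) 0 t := by
  refine (((h₁.pow 2).const_mul a).add ((h₂.pow 2).const_mul (1 / a))).congr_deriv ?_
  field_simp
  ring

/-- For `P = 0`, any light-like solution of the reduced Fefferman equations (i.e. one with
`H_a = (1/2)(a·M₁(0)² + (1/a)·M₂(0)²) = 0`) is constant: `M₁ ≡ 0`, `M₂ ≡ 0`, `M₃ ≡ M₃(0)`. -/
theorem lightlike_P_zero_constant (a : ℝ) (ha : 0 < a) (M₁ M₂ M₃ : ℝ → ℝ)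
    (h₁ : ∀ t, HasDerivAt M₁ (-(M₂ t) * (M₃ t / a)) t)
    (h₂ : ∀ t, HasDerivAt M₂ (M₁ t * (a * M₃ t)) t)
    (h₃ : ∀ t, HasDerivAt M₃ ((1/a - a) * M₁ t * M₂ t) t)
    (hH : (1/2) * (a * M₁ 0 ^ 2 + (1/a) * M₂ 0 ^ 2) = 0) :
    ∀ t : ℝ, M₁ t = 0 ∧ M₂ t = 0 ∧ M₃ t = M₃ 0 := by
  have energy_const := eq_of_hasDerivAt_zero
    (fun t => hasDerivAt_mul_sq_add_inv_mul_sq ha.ne' (h₁ t) (h₂ t))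
  have hM₁₂ : ∀ t, M₁ t = 0 ∧ M₂ t = 0 := fun t =>
    eq_zero_of_mul_sq_add_inv_mul_sq_eq_zero ha <| (energy_const t 0).trans (by linarith)
  have hM₃' : ∀ t, HasDerivAt M₃ 0 t := fun t => by
    simpa [(hM₁₂ t).1] using h₃ t
  exact fun t => ⟨(hM₁₂ t).1, (hM₁₂ t).2, eq_of_hasDerivAt_zero hM₃' t 0⟩
end

section
/- Let a be a real number with 1/√3 < a < √3 and set c(a) = (9/8)(a + 1/a). Then the function F_a : ℝ² → ℝ, F_a(x,y) = x² + y² + (1/9)(a·x² + y²/a - c(a))², has (0,0) as its unique critical point (the gradient of F_a vanishes only at the origin), and F_a attains a strict global minimum there: F_a(x,y) > F_a(0,0) for all (x,y) ≠ (0,0). -/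
/-!
Write `Q = a x² + y²/a` and `c = c(a)`. Expanding the square,
`F_a(x, y) - F_a(0, 0) = (1 - 2ac/9) x² + (1 - 2c/(9a)) y² + Q²/9`, and the gradient of `F_a` is
`(2x (1 - 2ac/9 + 2aQ/9), 2y (1 - 2c/(9a) + 2Q/(9a)))`. The window `1/√3 < a < √3` is exactly
the condition `2ac/9 < 1` and `2c/(9a) < 1`, which makes all these coefficients positive.
-/

/-- `F_a`, the Casimir `K` restricted to the light-cone paraboloid `{H_a(M,1) = 0}` of the
reduced Fefferman Hamiltonian, in the coordinates `(M₁, M₂) = (x, y)`. -/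
noncomputable def Fa (a : ℝ) (p : ℝ × ℝ) : ℝ :=
  p.1 ^ 2 + p.2 ^ 2 + (1/9) * (a * p.1 ^ 2 + p.2 ^ 2 / a - (9/8) * (a + 1/a)) ^ 2

open ContinuousLinearMap

theorem smul_fst_add_smul_snd_eq_zero {u v : ℝ} :
    u • fst ℝ ℝ ℝ + v • snd ℝ ℝ ℝ = 0 ↔ u = 0 ∧ v = 0 := by
  refine ⟨fun h => ⟨?_, ?_⟩, fun ⟨hu, hv⟩ => by simp [hu, hv]⟩
  · simpa using congrArg (· (1, 0)) h
  · simpa using congrArg (· (0, 1)) h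

noncomputable def casimirOnParaboloid (α β γ κ : ℝ) (p : ℝ × ℝ) : ℝ :=
  p.1 ^ 2 + p.2 ^ 2 + κ * (α * p.1 ^ 2 + β * p.2 ^ 2 - γ) ^ 2

section casimirOnParaboloid

variable (α β γ κ : ℝ)

theorem casimirOnParaboloid_sub_zero (p : ℝ × ℝ) :
    casimirOnParaboloid α β γ κ p - casimirOnParaboloid α β γ κ (0, 0) =
      (1 - 2 * κ * α * γ) * p.1 ^ 2 + (1 - 2 * κ * β * γ) * p.2 ^ 2 +
        κ * (α * p.1 ^ 2 + β * p.2 ^ 2) ^ 2 := by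
  simp only [casimirOnParaboloid]
  ring

theorem hasFDerivAt_casimirOnParaboloid (p : ℝ × ℝ) :
    HasFDerivAt (casimirOnParaboloid α β γ κ)
      ((2 * p.1 * (1 + 2 * κ * α * (α * p.1 ^ 2 + β * p.2 ^ 2 - γ))) • fst ℝ ℝ ℝ +
        (2 * p.2 * (1 + 2 * κ * β * (α * p.1 ^ 2 + β * p.2 ^ 2 - γ))) • snd ℝ ℝ ℝ) p := by
  have hx : HasFDerivAt (fun q : ℝ × ℝ => q.1) (fst ℝ ℝ ℝ) p := hasFDerivAt_fst
  have hy : HasFDerivAt (fun q : ℝ × ℝ => q.2) (snd ℝ ℝ ℝ) p := hasFDerivAt_snd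
  have hQ := (((hx.pow 2).const_mul α).add ((hy.pow 2).const_mul β)).sub_const γ
  refine (((hx.pow 2).add (hy.pow 2)).add ((hQ.pow 2).const_mul κ)).congr_fderiv ?_
  ext <;> simp <;> ring

variable {α β γ κ}

theorem casimirOnParaboloid_zero_lt (hκ : 0 ≤ κ) (hα : 2 * κ * α * γ < 1)
    (hβ : 2 * κ * β * γ < 1) {p : ℝ × ℝ} (hp : p ≠ (0, 0)) :
    casimirOnParaboloid α β γ κ (0, 0) < casimirOnParaboloid α β γ κ p := by
  have hx : 0 ≤ (1 - 2 * κ * α * γ) * p.1 ^ 2 := mul_nonneg (by linarith) (sq_nonneg _)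
  have hy : 0 ≤ (1 - 2 * κ * β * γ) * p.2 ^ 2 := mul_nonneg (by linarith) (sq_nonneg _)
  have hQ : 0 ≤ κ * (α * p.1 ^ 2 + β * p.2 ^ 2) ^ 2 := by positivity
  have hne : p.1 ≠ 0 ∨ p.2 ≠ 0 := by
    by_contra! h
    exact hp (Prod.ext h.1 h.2)
  have hpos : 0 < (1 - 2 * κ * α * γ) * p.1 ^ 2 + (1 - 2 * κ * β * γ) * p.2 ^ 2 := by
    rcases hne with hne | hne
    · have := mul_pos (sub_pos.2 hα) (sq_pos_of_ne_zero hne)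
      linarith
    · have := mul_pos (sub_pos.2 hβ) (sq_pos_of_ne_zero hne)
      linarith
  linarith [casimirOnParaboloid_sub_zero α β γ κ p]

theorem fderiv_casimirOnParaboloid_eq_zero_iff (hκ : 0 ≤ κ) (hα₀ : 0 ≤ α)
    (hβ₀ : 0 ≤ β) (hα : 2 * κ * α * γ < 1) (hβ : 2 * κ * β * γ < 1) (p : ℝ × ℝ) :
    fderiv ℝ (casimirOnParaboloid α β γ κ) p = 0 ↔ p = (0, 0) := by
  have hQ : 0 ≤ α * p.1 ^ 2 + β * p.2 ^ 2 := by positivity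
  have h₁ : 0 < 1 + 2 * κ * α * (α * p.1 ^ 2 + β * p.2 ^ 2 - γ) := by
    nlinarith [mul_nonneg (mul_nonneg hκ hα₀) hQ]
  have h₂ : 0 < 1 + 2 * κ * β * (α * p.1 ^ 2 + β * p.2 ^ 2 - γ) := by
    nlinarith [mul_nonneg (mul_nonneg hκ hβ₀) hQ]
  rw [(hasFDerivAt_casimirOnParaboloid α β γ κ p).fderiv, smul_fst_add_smul_snd_eq_zero,
    Prod.ext_iff]
  simp [h₁.ne', h₂.ne']

end casimirOnParaboloid

theorem Fa_eq_casimirOnParaboloid (a : ℝ) :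
    Fa a = casimirOnParaboloid a a⁻¹ ((9 / 8) * (a + 1 / a)) (1 / 9) := by
  funext p
  simp only [Fa, casimirOnParaboloid, div_eq_mul_inv]
  ring

/-- For `1/√3 < a < √3`, the origin is the unique critical point of `F_a` and `F_a`
attains a strict global minimum there. -/
theorem Fa_origin_unique_critical_strict_min (a : ℝ)
    (ha₁ : 1 / Real.sqrt 3 < a) (ha₂ : a < Real.sqrt 3) :
    (∀ p : ℝ × ℝ, fderiv ℝ (Fa a) p = 0 ↔ p = (0, 0)) ∧
    (∀ p : ℝ × ℝ, p ≠ (0, 0) → Fa a p > Fa a (0, 0)) := by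
  have hs : 0 < Real.sqrt 3 := by positivity
  have ha : 0 < a := (one_div_pos.2 hs).trans ha₁
  have hsq : Real.sqrt 3 ^ 2 = 3 := Real.sq_sqrt (by norm_num)
  have hx_coeff : 2 * (1 / 9) * a * ((9 / 8) * (a + 1 / a)) < 1 := by
    have : a ^ 2 < 3 := by nlinarith
    field_simp
    nlinarith
  have hy_coeff : 2 * (1 / 9) * a⁻¹ * ((9 / 8) * (a + 1 / a)) < 1 := by
    have : 1 < 3 * a ^ 2 := by
      rw [div_lt_iff₀ hs] at ha₁
      nlinarith
    field_simp
    nlinarith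
  rw [Fa_eq_casimirOnParaboloid]
  exact ⟨fderiv_casimirOnParaboloid_eq_zero_iff (by norm_num) ha.le (inv_nonneg.2 ha.le)
      hx_coeff hy_coeff,
    fun p hp => casimirOnParaboloid_zero_lt (by norm_num) hx_coeff hy_coeff hp⟩
end

section
/- Let a > √3 and set c(a) = (9/8)(a + 1/a) and x₀ = (3/(2a))·√((a² - 3)/2). Then the set of critical points of F_a(x,y) = x² + y² + (1/9)(a·x² + y²/a - c(a))² is exactly the three-point set {(0,0), (x₀, 0), (-x₀, 0)}. -/
namespace ContinuousLinearMap

theorem smul_fst_add_smul_snd_eq_zero_iff {R : Type*} [CommSemiring R] [TopologicalSpace R]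
    [IsTopologicalSemiring R] {c₁ c₂ : R} :
    c₁ • fst R R R + c₂ • snd R R R = 0 ↔ c₁ = 0 ∧ c₂ = 0 := by
  refine ⟨fun h => ⟨?_, ?_⟩, fun ⟨h₁, h₂⟩ => by ext <;> simp [h₁, h₂]⟩
  · simpa using DFunLike.congr_fun h (1, 0)
  · simpa using DFunLike.congr_fun h (0, 1)

end ContinuousLinearMap

open ContinuousLinearMap

noncomputable def lightConeM₃ (a : ℝ) (p : ℝ × ℝ) : ℝ :=
  (a * p.1 ^ 2 + p.2 ^ 2 / a - (9/8) * (a + 1/a)) / 3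

theorem Fa_eq (a : ℝ) : Fa a = fun p => p.1 ^ 2 + p.2 ^ 2 + lightConeM₃ a p ^ 2 := by
  funext p
  simp only [Fa, lightConeM₃]
  ring

theorem hasFDerivAt_lightConeM₃ (a : ℝ) (p : ℝ × ℝ) :
    HasFDerivAt (lightConeM₃ a)
      ((2 * a * p.1 / 3) • fst ℝ ℝ ℝ + (2 * p.2 / (3 * a)) • snd ℝ ℝ ℝ) p := by
  have hx : HasFDerivAt (fun q : ℝ × ℝ => q.1 ^ 2) _ p :=
    (hasFDerivAt_fst (𝕜 := ℝ) (p := p)).pow 2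
  have hy : HasFDerivAt (fun q : ℝ × ℝ => q.2 ^ 2) _ p :=
    (hasFDerivAt_snd (𝕜 := ℝ) (p := p)).pow 2
  have hM : lightConeM₃ a =
      fun q => (a * q.1 ^ 2 + q.2 ^ 2 * a⁻¹ - (9/8) * (a + 1/a)) * 3⁻¹ := by
    funext q
    simp only [lightConeM₃]
    ring
  rw [hM]
  exact ((((hx.const_mul a).add (hy.mul_const a⁻¹)).sub_const _).mul_const _).congr_fderiv
    (by ext <;> simp <;> ring)

theorem hasFDerivAt_Fa (a : ℝ) (p : ℝ × ℝ) :
    HasFDerivAt (Fa a)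
      ((2 * p.1 * (1 + 2 * a / 3 * lightConeM₃ a p)) • fst ℝ ℝ ℝ +
        (2 * p.2 * (1 + 2 / (3 * a) * lightConeM₃ a p)) • snd ℝ ℝ ℝ) p := by
  have hx : HasFDerivAt (fun q : ℝ × ℝ => q.1 ^ 2) _ p :=
    (hasFDerivAt_fst (𝕜 := ℝ) (p := p)).pow 2
  have hy : HasFDerivAt (fun q : ℝ × ℝ => q.2 ^ 2) _ p :=
    (hasFDerivAt_snd (𝕜 := ℝ) (p := p)).pow 2
  rw [Fa_eq]
  exact ((hx.add hy).add ((hasFDerivAt_lightConeM₃ a p).pow 2)).congr_fderiv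
    (by ext <;> simp <;> ring)

theorem fderiv_Fa_eq_zero_iff {a : ℝ} (ha : a ≠ 0) (p : ℝ × ℝ) :
    fderiv ℝ (Fa a) p = 0 ↔
      (p.1 = 0 ∨ 2 * a * lightConeM₃ a p = -3) ∧
        (p.2 = 0 ∨ 2 * lightConeM₃ a p = -3 * a) := by
  rw [(hasFDerivAt_Fa a p).fderiv, smul_fst_add_smul_snd_eq_zero_iff]
  simp only [mul_eq_zero, two_ne_zero, false_or]
  refine and_congr (or_congr_right ?_) (or_congr_right ?_)
  · exact ⟨fun h => by linear_combination 3 * h, fun h => by linear_combination h / 3⟩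
  · field_simp
    constructor <;> intro h <;> linear_combination h

theorem fderiv_Fa_eq_zero_iff_of_one_lt_sq {a : ℝ} (ha : 1 < a ^ 2) (p : ℝ × ℝ) :
    fderiv ℝ (Fa a) p = 0 ↔ p = 0 ∨ p.2 = 0 ∧ 8 * a ^ 2 * p.1 ^ 2 = 9 * (a ^ 2 - 3) := by
  have ha₀ : a ≠ 0 := by rintro rfl; norm_num at ha
  obtain ⟨x, y⟩ := p
  have hM : 3 * a * lightConeM₃ a (x, y) = a ^ 2 * x ^ 2 + y ^ 2 - (9/8) * (a ^ 2 + 1) := by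
    simp only [lightConeM₃]
    field_simp
  rw [fderiv_Fa_eq_zero_iff ha₀, Prod.mk_eq_zero]
  dsimp only
  constructor
  · rintro ⟨rfl | hx, rfl | hy⟩
    · exact .inl ⟨rfl, rfl⟩
    · have hy' : 8 * y ^ 2 = 9 * (1 - 3 * a ^ 2) := by linear_combination 12 * a * hy - 8 * hM
      nlinarith [sq_nonneg y]
    · exact .inr ⟨rfl, by linear_combination 12 * hx - 8 * hM⟩
    · have ha₁ : a ^ 2 = 1 := by linear_combination (a * hy - hx) / 3
      linarith
  · rintro (⟨rfl, rfl⟩ | ⟨rfl, hx⟩)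
    · exact ⟨.inl rfl, .inl rfl⟩
    · exact ⟨.inr (by linear_combination (2/3) * hM + hx / 12), .inl rfl⟩

/-- For `a > √3` the critical points of `F_a` are exactly the origin and the two points
`(±x₀, 0)` with `x₀ = (3/(2a))·√((a² - 3)/2)`. -/
theorem Fa_critical_points (a : ℝ) (ha : Real.sqrt 3 < a)
    (x₀ : ℝ) (hx₀ : x₀ = (3 / (2 * a)) * Real.sqrt ((a ^ 2 - 3) / 2)) :
    {p : ℝ × ℝ | fderiv ℝ (Fa a) p = 0} =
      {((0 : ℝ), (0 : ℝ)), (x₀, 0), (-x₀, 0)} := by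
  have ha₀ : 0 < a := (Real.sqrt_nonneg 3).trans_lt ha
  have ha₃ : 3 < a ^ 2 := (Real.sqrt_lt' ha₀).mp ha
  have hx₀_sq : 8 * a ^ 2 * x₀ ^ 2 = 9 * (a ^ 2 - 3) := by
    rw [hx₀, mul_pow, Real.sq_sqrt (by linarith)]
    field_simp
    ring
  ext ⟨x, y⟩
  simp only [Set.mem_ofPred_eq, Set.mem_insert_iff, Set.mem_singleton_iff, Prod.mk.injEq,
    fderiv_Fa_eq_zero_iff_of_one_lt_sq (by linarith : 1 < a ^ 2), Prod.mk_eq_zero, ← hx₀_sq,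
    mul_right_inj' (by positivity : 8 * a ^ 2 ≠ 0), sq_eq_sq_iff_eq_or_eq_neg]
  tauto
end

section
/- Let a > √3 and set c(a) = (9/8)(a + 1/a) and x₀ = (3/(2a))·√((a² - 3)/2). Then for all (x,y) ∈ ℝ², F_a(x,y) ≥ 9(a² - 1)/(8a²), with equality if and only if (x,y) = (x₀, 0) or (x,y) = (-x₀, 0). In particular the absolute minimum m(a) of the Casimir K on the light-cone paraboloid equals 9(a² - 1)/(8a²) and is achieved at exactly two points. -/
/-- For `a > √3`, the absolute minimum of `F_a` (the Casimir `K` on the light-cone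
paraboloid) is `9(a² - 1)/(8a²)`, attained exactly at the two points `(±x₀, 0)` with
`x₀ = (3/(2a))·√((a² - 3)/2)`. -/
theorem Fa_min (a : ℝ) (ha : Real.sqrt 3 < a)
    (x₀ : ℝ) (hx₀ : x₀ = (3 / (2 * a)) * Real.sqrt ((a ^ 2 - 3) / 2)) :
    ∀ p : ℝ × ℝ, 9 * (a ^ 2 - 1) / (8 * a ^ 2) ≤ Fa a p ∧
      (Fa a p = 9 * (a ^ 2 - 1) / (8 * a ^ 2) ↔ p = (x₀, 0) ∨ p = (-x₀, 0)) := by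
  have h3 : (0:ℝ) < Real.sqrt 3 := Real.sqrt_pos.mpr (by norm_num)
  have ha0 : (0:ℝ) < a := h3.trans ha
  have hane : a ≠ 0 := ne_of_gt ha0
  have ha2 : (3:ℝ) < a ^ 2 := by
    nlinarith [Real.sq_sqrt (show (0:ℝ) ≤ 3 by norm_num), Real.sqrt_nonneg 3]
  have ha1 : (1:ℝ) < a ^ 2 := by linarith
  have hx₀2 : x₀ ^ 2 = 9 * (a ^ 2 - 3) / (8 * a ^ 2) := by
    rw [hx₀, mul_pow, Real.sq_sqrt (by linarith : (0:ℝ) ≤ (a ^ 2 - 3) / 2)]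
    field_simp
    ring
  rintro ⟨x, y⟩
  have key : Fa a (x, y) = 9 * (a ^ 2 - 1) / (8 * a ^ 2) +
      ((1/9) * (a * x ^ 2 + y ^ 2 / a - 9 * (a ^ 2 - 3) / (8 * a)) ^ 2
        + y ^ 2 * ((a ^ 2 - 1) / a ^ 2)) := by
    simp only [Fa]
    field_simp
    ring
  have t1 : 0 ≤ (1/9) * (a * x ^ 2 + y ^ 2 / a - 9 * (a ^ 2 - 3) / (8 * a)) ^ 2 := by
    positivity
  have t2 : 0 ≤ y ^ 2 * ((a ^ 2 - 1) / a ^ 2) := by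
    apply mul_nonneg (sq_nonneg y)
    apply div_nonneg (by linarith) (by positivity)
  constructor
  · linarith
  constructor
  · intro h
    have hsum : (1/9) * (a * x ^ 2 + y ^ 2 / a - 9 * (a ^ 2 - 3) / (8 * a)) ^ 2
        + y ^ 2 * ((a ^ 2 - 1) / a ^ 2) = 0 := by linarith
    have h1 : (1/9) * (a * x ^ 2 + y ^ 2 / a - 9 * (a ^ 2 - 3) / (8 * a)) ^ 2 = 0 := by
      linarith
    have h2 : y ^ 2 * ((a ^ 2 - 1) / a ^ 2) = 0 := by linarith
    have hy : y = 0 := by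
      have hk : (a ^ 2 - 1) / a ^ 2 ≠ 0 := by
        apply div_ne_zero (by linarith) (by positivity)
      have := (mul_eq_zero.mp h2).resolve_right hk
      exact pow_eq_zero_iff (n := 2) (by norm_num) |>.mp this
    have hT : a * x ^ 2 + y ^ 2 / a - 9 * (a ^ 2 - 3) / (8 * a) = 0 := by
      have := (mul_eq_zero.mp h1).resolve_left (by norm_num)
      exact pow_eq_zero_iff (n := 2) (by norm_num) |>.mp this
    rw [hy] at hT
    have hxsq : x ^ 2 = x₀ ^ 2 := by
      rw [hx₀2]
      field_simp at hT
      rw [eq_div_iff (by positivity : (8:ℝ) * a ^ 2 ≠ 0)]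
      linear_combination hT
    have : (x - x₀) * (x + x₀) = 0 := by linear_combination hxsq
    rcases mul_eq_zero.mp this with h | h
    · left; simp [Prod.ext_iff, hy]; linarith
    · right; simp [Prod.ext_iff, hy]; linarith
  · have e1 : a * x₀ ^ 2 + (0:ℝ) ^ 2 / a - 9 * (a ^ 2 - 3) / (8 * a) = 0 := by
      rw [hx₀2]; field_simp; ring
    have e2 : a * (-x₀) ^ 2 + (0:ℝ) ^ 2 / a - 9 * (a ^ 2 - 3) / (8 * a) = 0 := by
      rw [show (-x₀) ^ 2 = x₀ ^ 2 by ring]; exact e1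
    rintro (h | h) <;>
      obtain ⟨h1, h2⟩ := Prod.mk.injEq .. ▸ h <;> subst h1 <;> subst h2 <;>
      rw [key]
    · rw [e1]; ring
    · rw [e2]; ring
end

section
/- Let a be a real number with 1/√3 < a < √3, set c(a) = (9/8)(a + 1/a), and let k be any real number with k > F_a(0,0) = (9/64)(a + 1/a)². Then the level set {(x,y) ∈ ℝ² : F_a(x,y) = k} is a nonempty compact set homeomorphic to the circle S¹. (These level curves are the closed integral curves of the reduced dynamics encircling the origin.) -/
/-!
Along the ray `t ↦ t • p`, `F_a(t • p) = s A + (s B - c)² / 9` with `s = t²`, `A = |p|²` and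
`B = a x² + y² / a`, a convex quadratic in `s` whose slope at `s = 0` is
`A - 2Bc/9 = ((3 - a²) x² + (3 - a⁻²) y²) / 4`. It is positive because `a² < 3` and
`a⁻² < 3`, so `F_a` increases strictly along every ray. Since `F_a(0) < k` and `F_a` is coercive,
every ray meets `{F_a = k}` exactly once, and radial projection is a continuous bijection from
this compact set onto the unit circle.
-/

open Filter Set Metric

lemma isCompact_setOf_eq_of_tendsto_cocompact {X : Type*} [TopologicalSpace X] {f : X → ℝ}
    (hf : Continuous f) (hcoer : Tendsto f (cocompact X) atTop) (k : ℝ) :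
    IsCompact {x | f x = k} := by
  obtain ⟨K, hK, hKc⟩ := mem_cocompact.1 (hcoer.eventually_gt_atTop k)
  refine hK.of_isClosed_subset (isClosed_eq hf continuous_const) fun x hx => ?_
  by_contra hxK
  exact (hKc hxK : k < f x).ne' hx

section RadialLevelSet

variable {E F : Type*} [NormedAddCommGroup E] [NormedSpace ℝ E]
  [NormedAddCommGroup F] [NormedSpace ℝ F] {f : E → ℝ} {k : ℝ}

lemma exists_pos_smul_eq_of_tendsto_cocompact (hf : Continuous f)
    (hcoer : Tendsto f (cocompact E) atTop) (h0 : f 0 < k) {u : E} (hu : u ≠ 0) :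
    ∃ t : ℝ, 0 < t ∧ f (t • u) = k := by
  have hray : Tendsto (fun t : ℝ => t • u) atTop (cocompact E) := by
    refine (tendsto_norm_atTop_iff_cobounded.1 ?_).mono_right cobounded_le_cocompact
    simpa only [norm_smul, Real.norm_eq_abs] using
      tendsto_abs_atTop_atTop.atTop_mul_const (norm_pos_iff.2 hu)
  obtain ⟨T, hT⟩ := ((hcoer.comp hray).eventually_ge_atTop k).exists_forall_of_atTop
  have hcont : ContinuousOn (fun t : ℝ => f (t • u)) (Icc 0 (max T 0)) := by fun_prop
  obtain ⟨t, ⟨ht, -⟩, hft⟩ := intermediate_value_Ioc (le_max_right T 0) hcont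
    ⟨by simpa using h0, hT _ (le_max_left T 0)⟩
  exact ⟨t, ht, hft⟩

theorem nonempty_homeomorph_sphere_of_strictMonoOn_smul (hf : Continuous f)
    (hcoer : Tendsto f (cocompact E) atTop) (h0 : f 0 < k)
    (hmono : ∀ x ≠ 0, StrictMonoOn (fun t : ℝ => f (t • x)) (Ici 0)) :
    Nonempty ({x | f x = k} ≃ₜ sphere (0 : E) 1) := by
  have hne : ∀ x : {x | f x = k}, (x : E) ≠ 0 := fun x hx => h0.ne (hx ▸ x.2)
  have : CompactSpace {x | f x = k} :=
    isCompact_iff_compactSpace.1 (isCompact_setOf_eq_of_tendsto_cocompact hf hcoer k)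
  let proj : {x | f x = k} → sphere (0 : E) 1 := fun x =>
    ⟨‖(x : E)‖⁻¹ • (x : E), by simp [norm_smul, hne x]⟩
  have hproj : Continuous proj :=
    ((continuous_subtype_val.norm.inv₀ fun x => norm_ne_zero_iff.2 (hne x)).smul
      continuous_subtype_val).subtype_mk _
  have hinj : Function.Injective proj := by
    intro x y hxy
    have hu : ‖(x : E)‖⁻¹ • (x : E) = ‖(y : E)‖⁻¹ • (y : E) :=
      congrArg Subtype.val hxy
    have hx : (x : E) = ‖(x : E)‖ • (‖(x : E)‖⁻¹ • (x : E)) :=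
      (smul_inv_smul₀ (norm_ne_zero_iff.2 (hne x)) _).symm
    have hy : (y : E) = ‖(y : E)‖ • (‖(x : E)‖⁻¹ • (x : E)) := by
      rw [hu, smul_inv_smul₀ (norm_ne_zero_iff.2 (hne y))]
    have hnorm : ‖(x : E)‖ = ‖(y : E)‖ := by
      refine (hmono _ (smul_ne_zero (inv_ne_zero (norm_ne_zero_iff.2 (hne x))) (hne x))).injOn
        (norm_nonneg _) (norm_nonneg _) ?_
      rw [← hx, ← hy]
      exact x.2.trans y.2.symm
    exact Subtype.ext (hx.trans (hnorm ▸ hy.symm))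
  have hsurj : Function.Surjective proj := by
    rintro ⟨u, hu⟩
    have hu1 : ‖u‖ = 1 := mem_sphere_zero_iff_norm.1 hu
    obtain ⟨t, ht, hft⟩ := exists_pos_smul_eq_of_tendsto_cocompact hf hcoer h0
      (norm_ne_zero_iff.1 (hu1.symm ▸ one_ne_zero))
    refine ⟨⟨t • u, hft⟩, Subtype.ext ?_⟩
    simp [proj, norm_smul, hu1, abs_of_pos ht, smul_smul, inv_mul_cancel₀ ht.ne']
  exact ⟨hproj.homeoOfEquivCompactToT2 (f := Equiv.ofBijective proj ⟨hinj, hsurj⟩)⟩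

theorem nonempty_homeomorph_sphere_of_strictMonoOn_smul_of_equiv (L : E ≃L[ℝ] F) {g : F → ℝ}
    (hg : Continuous g) (hcoer : Tendsto g (cocompact F) atTop) (h0 : g 0 < k)
    (hmono : ∀ y ≠ 0, StrictMonoOn (fun t : ℝ => g (t • y)) (Ici 0)) :
    Nonempty ({y | g y = k} ≃ₜ sphere (0 : E) 1) := by
  obtain ⟨e⟩ := nonempty_homeomorph_sphere_of_strictMonoOn_smul (f := g ∘ L)
    (hg.comp L.continuous) (hcoer.comp L.toHomeomorph.map_cocompact.le) (by simpa using h0)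
    fun x hx => by simpa only [Function.comp_apply, map_smul] using hmono (L x) (by simpa using hx)
  exact ⟨((L.toHomeomorph.symm.image _).trans
    (Homeomorph.setCongr (L.image_symm_eq_preimage _))).trans e⟩

end RadialLevelSet

lemma strictMonoOn_mul_add_mul_sq {A B c m : ℝ} (hm : 0 ≤ m)
    (h : 2 * m * B * c < A) :
    StrictMonoOn (fun s : ℝ => s * A + m * (s * B - c) ^ 2) (Ici 0) := by
  intro s₁ hs₁ s₂ hs₂ hlt
  have hslope : 0 < A + m * (B ^ 2 * (s₁ + s₂) - 2 * B * c) := by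
    have : 0 ≤ m * B ^ 2 * (s₁ + s₂) := by
      have := add_nonneg (mem_Ici.1 hs₁) (mem_Ici.1 hs₂); positivity
    nlinarith
  have key : (s₂ * A + m * (s₂ * B - c) ^ 2) - (s₁ * A + m * (s₁ * B - c) ^ 2)
      = (s₂ - s₁) * (A + m * (B ^ 2 * (s₁ + s₂) - 2 * B * c)) := by ring
  nlinarith [mul_pos (sub_pos.2 hlt) hslope]

section Fa

variable {a : ℝ}

lemma continuous_Fa (a : ℝ) : Continuous (Fa a) := by
  unfold Fa; fun_prop

lemma Fa_zero (a : ℝ) : Fa a 0 = (9/64) * (a + 1/a) ^ 2 := by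
  simp only [Fa, Prod.fst_zero, Prod.snd_zero]; ring

lemma Fa_smul (a t : ℝ) (p : ℝ × ℝ) :
    Fa a (t • p) = t ^ 2 * (p.1 ^ 2 + p.2 ^ 2)
      + (1/9) * (t ^ 2 * (a * p.1 ^ 2 + p.2 ^ 2 / a) - (9/8) * (a + 1/a)) ^ 2 := by
  simp only [Fa, Prod.smul_fst, Prod.smul_snd, smul_eq_mul]; ring

lemma norm_sq_le_Fa (a : ℝ) (p : ℝ × ℝ) : ‖p‖ ^ 2 ≤ Fa a p := by
  have hp : ‖p‖ ^ 2 ≤ p.1 ^ 2 + p.2 ^ 2 := by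
    rw [Prod.norm_def, Real.norm_eq_abs, Real.norm_eq_abs]
    rcases le_total |p.1| |p.2| with h | h
    · rw [max_eq_right h, sq_abs]; nlinarith
    · rw [max_eq_left h, sq_abs]; nlinarith
  unfold Fa; nlinarith [sq_nonneg (a * p.1 ^ 2 + p.2 ^ 2 / a - (9/8) * (a + 1/a))]

lemma tendsto_Fa_cocompact (a : ℝ) : Tendsto (Fa a) (cocompact (ℝ × ℝ)) atTop :=
  tendsto_atTop_mono (norm_sq_le_Fa a)
    ((tendsto_pow_atTop two_ne_zero).comp tendsto_norm_cocompact_atTop)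

lemma sq_lt_three_and_one_lt_three_mul_sq (ha₁ : 1 / Real.sqrt 3 < a)
    (ha₂ : a < Real.sqrt 3) : 0 < a ∧ a ^ 2 < 3 ∧ 1 < 3 * a ^ 2 := by
  have ha : 0 < a := lt_trans (by positivity) ha₁
  rw [one_div, ← Real.sqrt_inv, Real.sqrt_lt' ha] at ha₁
  rw [Real.lt_sqrt ha.le] at ha₂
  refine ⟨ha, ha₂, ?_⟩
  linarith [(inv_lt_iff_one_lt_mul₀' (by norm_num : (0:ℝ) < 3)).1 ha₁]

lemma strictMonoOn_Fa_smul (ha₁ : 1 / Real.sqrt 3 < a) (ha₂ : a < Real.sqrt 3)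
    {p : ℝ × ℝ} (hp : p ≠ 0) : StrictMonoOn (fun t : ℝ => Fa a (t • p)) (Ici 0) := by
  obtain ⟨ha, ha3, h3a⟩ := sq_lt_three_and_one_lt_three_mul_sq ha₁ ha₂
  have hpos : 0 < p.1 ^ 2 + p.2 ^ 2 := by
    rcases p with ⟨x, y⟩
    rcases not_and_or.1 (mt Prod.mk_eq_zero.2 hp) with h | h <;> positivity
  have h1 : 0 < 3 - a ^ 2 := by linarith
  have h2 : 0 < (3 * a ^ 2 - 1) / a ^ 2 := div_pos (by linarith) (by positivity)
  have hweighted : 0 < (3 - a ^ 2) * p.1 ^ 2 + (3 * a ^ 2 - 1) / a ^ 2 * p.2 ^ 2 := by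
    obtain ⟨m, hm, hm₁, hm₂⟩ :
        ∃ m, 0 < m ∧ m ≤ 3 - a ^ 2 ∧ m ≤ (3 * a ^ 2 - 1) / a ^ 2 :=
      ⟨_, lt_min h1 h2, min_le_left _ _, min_le_right _ _⟩
    linarith [mul_le_mul_of_nonneg_right hm₁ (sq_nonneg p.1),
      mul_le_mul_of_nonneg_right hm₂ (sq_nonneg p.2), mul_pos hm hpos]
  have hslope : 2 * (1/9) * (a * p.1 ^ 2 + p.2 ^ 2 / a) * ((9/8) * (a + 1/a))
      < p.1 ^ 2 + p.2 ^ 2 := by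
    have e : p.1 ^ 2 + p.2 ^ 2 - 2 * (1/9) * (a * p.1 ^ 2 + p.2 ^ 2 / a) * ((9/8) * (a + 1/a))
        = ((3 - a ^ 2) * p.1 ^ 2 + (3 * a ^ 2 - 1) / a ^ 2 * p.2 ^ 2) / 4 := by
      field_simp; ring
    linarith
  have hquad := strictMonoOn_mul_add_mul_sq (by norm_num) hslope
  have hsq : StrictMonoOn (fun t : ℝ => t ^ 2) (Ici 0) := pow_left_strictMonoOn₀ two_ne_zero
  convert hquad.comp hsq fun t _ => sq_nonneg t using 1
  exact funext fun t => Fa_smul a t p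

end Fa

/-- For `1/√3 < a < √3` and any `k > F_a(0,0) = (9/64)(a + 1/a)²`, the level set
`{F_a = k}` is a nonempty compact set homeomorphic to the circle `S¹`. -/
theorem Fa_level_set_circle (a : ℝ)
    (ha₁ : 1 / Real.sqrt 3 < a) (ha₂ : a < Real.sqrt 3)
    (k : ℝ) (hk : (9/64) * (a + 1/a) ^ 2 < k) :
    ({p : ℝ × ℝ | Fa a p = k}).Nonempty ∧
    IsCompact {p : ℝ × ℝ | Fa a p = k} ∧
    Nonempty ({p : ℝ × ℝ | Fa a p = k} ≃ₜ
      Metric.sphere (0 : EuclideanSpace ℝ (Fin 2)) 1) := by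
  obtain ⟨e⟩ := nonempty_homeomorph_sphere_of_strictMonoOn_smul_of_equiv
    ((EuclideanSpace.equiv (Fin 2) ℝ).trans (ContinuousLinearEquiv.finTwoArrow ℝ ℝ))
    (continuous_Fa a) (tendsto_Fa_cocompact a) (by rwa [Fa_zero])
    fun p hp => strictMonoOn_Fa_smul ha₁ ha₂ hp
  obtain ⟨w, hw⟩ :=
    (NormedSpace.sphere_nonempty (x := (0 : EuclideanSpace ℝ (Fin 2)))).2 zero_le_one
  exact ⟨⟨_, (e.symm ⟨w, hw⟩).2⟩,
    isCompact_setOf_eq_of_tendsto_cocompact (continuous_Fa a) (tendsto_Fa_cocompact a) k, ⟨e⟩⟩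
end

section
/- Let a > √3 and set x₀ = (3/(2a))·√((a² - 3)/2). Then the two points M± = (±x₀, 0, -3/(2a)) ∈ ℝ³ are equilibrium points of the reduced Fefferman equations with P = 1: the right-hand sides -M₂(M₃/a + 3/2), M₁(a·M₃ + 3/2), and (1/a - a)·M₁·M₂ all vanish at M±, and moreover H_a(M±, 1) = (1/2)(a·x₀² - 3·(-3/(2a)) - (9/8)(a + 1/a)) = 0, so M± lie on the light cone. (These equilibria correspond to closed chains; they are the elliptic fixed points inside the two lobes of the figure eight.) -/
/-! On the line `M₂ = 0`, `M₃ = -3/(2a)` the three right-hand sides vanish (the middle one because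
`a·M₃ + 3/2 = 0`), and the Hamiltonian restricted to it is `(a/2)(M₁² - x₀²)`, so it vanishes at
`M₁ = ±x₀`; `a > √3` is what makes `x₀² = 9(a² - 3)/(8a²)` hold, i.e. the square root real. -/

lemma sq_div_mul_sqrt {a : ℝ} (ha : 3 < a ^ 2) :
    (3 / (2 * a) * Real.sqrt ((a ^ 2 - 3) / 2)) ^ 2 = 9 * (a ^ 2 - 3) / (8 * a ^ 2) := by
  have ha0 : a ≠ 0 := by rintro rfl; norm_num at ha
  rw [mul_pow, Real.sq_sqrt (by linarith)]
  field_simp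
  ring

lemma hamiltonian_on_equilibrium_line {a : ℝ} (ha : a ≠ 0) (M₁ : ℝ) :
    (1/2) * (a * M₁ ^ 2 + (1/a) * 0 ^ 2 - 3 * (-3 / (2 * a)) - (9/8) * (a + 1/a)) =
      a / 2 * (M₁ ^ 2 - 9 * (a ^ 2 - 3) / (8 * a ^ 2)) := by
  field_simp
  ring

/-- For `a > √3`, the two points `M± = (±x₀, 0, -3/(2a))` with
`x₀ = (3/(2a))·√((a² - 3)/2)` are equilibria of the reduced Fefferman equations with
`P = 1` (all right-hand sides vanish there) and they lie on the light cone `{H_a(·,1)=0}`. -/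
theorem elliptic_equilibria (a : ℝ) (ha : Real.sqrt 3 < a)
    (x₀ : ℝ) (hx₀ : x₀ = (3 / (2 * a)) * Real.sqrt ((a ^ 2 - 3) / 2)) :
    ∀ s : ℝ, s = 1 ∨ s = -1 →
      ∀ M₁ M₂ M₃ : ℝ, M₁ = s * x₀ → M₂ = 0 → M₃ = -3 / (2 * a) →
        -M₂ * (M₃ / a + 3/2) = 0 ∧
        M₁ * (a * M₃ + 3/2) = 0 ∧
        (1/a - a) * M₁ * M₂ = 0 ∧
        (1/2) * (a * M₁ ^ 2 + (1/a) * M₂ ^ 2 - 3 * M₃ - (9/8) * (a + 1/a)) = 0 := by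
  rintro s hs M₁ M₂ M₃ rfl rfl rfl
  have ha0 : 0 < a := (Real.sqrt_nonneg 3).trans_lt ha
  have ha3 : 3 < a ^ 2 := (Real.sqrt_lt' ha0).1 ha
  have hs2 : s ^ 2 = 1 := by rcases hs with rfl | rfl <;> norm_num
  have hM₃ : a * (-3 / (2 * a)) + 3/2 = 0 := by field_simp; ring
  have hM₁ : (s * x₀) ^ 2 = 9 * (a ^ 2 - 3) / (8 * a ^ 2) := by
    rw [mul_pow, hs2, one_mul, hx₀, sq_div_mul_sqrt ha3]
  refine ⟨by simp, by rw [hM₃, mul_zero], by simp, ?_⟩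
  rw [hamiltonian_on_equilibrium_line ha0.ne', hM₁, sub_self, mul_zero]
end

section
/- Let a > √3. Then there exists a nonconstant differentiable solution (M₁, M₂, M₃) : ℝ → ℝ³ of the reduced Fefferman equations with P = 1, i.e. M₁' = -M₂(M₃/a + 3/2), M₂' = M₁(a·M₃ + 3/2), M₃' = (1/a - a)·M₁·M₂, satisfying H_a(M₁(t), M₂(t), M₃(t), 1) = 0 for all t, and which is homoclinic to the equilibrium E_a = (0, 0, -(3/8)(a + 1/a)): the solution tends to E_a as t → +∞ and as t → -∞. -/
/-!
At an equilibrium `(0, 0, E)` the linearised equations are `M₁' = -α M₂`, `M₂' = -β M₁` with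
`α = E/a + 3/2` and `β = -(aE + 3/2)`; at `E = E_a` these are `3(3a² - 1)/(8a²)` and
`3(a² - 3)/8`, so for `a > √3` the equilibrium is a saddle. Writing `α = r²`, `β = q²` and
`k² = 3/2`, the ansatz
  `M₁ = k cosh(rqt) / (qV)`, `M₂ = k sinh(rqt) / (rV)`, `M₃ = E + 1/V`,
  `V = sinh²(rqt) / (2ar²) + a cosh²(rqt) / (2q²)`
solves the equations exactly: everything reduces to `cosh² - sinh² = 1` and
`a²α + β = 3(a² - 1)/2`. It also satisfies `a M₁² + M₂²/a = 3(M₃ - E)`, which is the light-cone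
condition precisely when `E = E_a`. Since `V → ∞` as `|t| → ∞`, `M₃ → E`, and this relation then
forces `M₁, M₂ → 0`.
-/

open Real Filter Topology

lemma Real.tendsto_cosh_cocompact : Tendsto cosh (cocompact ℝ) atTop := by
  refine tendsto_atTop_mono (fun x => ?_)
    ((tendsto_exp_atTop.comp tendsto_norm_cocompact_atTop).atTop_div_const two_pos)
  rw [Function.comp_apply, Real.norm_eq_abs, ← cosh_abs, cosh_eq]
  linarith [exp_pos (-|x|)]

lemma tendsto_zero_of_sq_le {ι : Type*} {l : Filter ι} {f g : ι → ℝ}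
    (hg : Tendsto g l (𝓝 0)) (hfg : ∀ i, f i ^ 2 ≤ g i) : Tendsto f l (𝓝 0) :=
  squeeze_zero_norm (fun i => abs_le_sqrt (hfg i)) (by simpa using hg.sqrt)

namespace ReducedFefferman

variable (a E r q k : ℝ)

noncomputable def orbitDenom (t : ℝ) : ℝ :=
  sinh (r * q * t) ^ 2 / (2 * a * r ^ 2) + a * cosh (r * q * t) ^ 2 / (2 * q ^ 2)

noncomputable def orbit₁ (t : ℝ) : ℝ := k * cosh (r * q * t) / (q * orbitDenom a r q t)

noncomputable def orbit₂ (t : ℝ) : ℝ := k * sinh (r * q * t) / (r * orbitDenom a r q t)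

noncomputable def orbit₃ (t : ℝ) : ℝ := E + 1 / orbitDenom a r q t

variable {a E r q k}

lemma hasDerivAt_orbitDenom (t : ℝ) :
    HasDerivAt (orbitDenom a r q)
      (r * q * sinh (r * q * t) * cosh (r * q * t) * (1 / (a * r ^ 2) + a / q ^ 2)) t := by
  have hlin := hasDerivAt_const_mul (x := t) (r * q)
  refine (((hlin.sinh.fun_pow 2).div_const (2 * a * r ^ 2)).add
    (((hlin.cosh.fun_pow 2).const_mul a).div_const (2 * q ^ 2))).congr_deriv ?_
  ring

lemma orbitDenom_ne_zero (ha : a ≠ 0) (hr : r ≠ 0) (hq : q ≠ 0) (t : ℝ) :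
    orbitDenom a r q t ≠ 0 := by
  have key : a * orbitDenom a r q t =
      sinh (r * q * t) ^ 2 / (2 * r ^ 2) + a ^ 2 * cosh (r * q * t) ^ 2 / (2 * q ^ 2) := by
    rw [orbitDenom]; field_simp
  exact right_ne_zero_of_mul (by rw [key]; positivity)

lemma hasDerivAt_orbit₁ (ha : a ≠ 0) (hr : r ≠ 0) (hq : q ≠ 0) (hα : E / a + 3 / 2 = r ^ 2)
    (t : ℝ) :
    HasDerivAt (orbit₁ a r q k) (-orbit₂ a r q k t * (orbit₃ a E r q t / a + 3 / 2)) t := by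
  have hV := orbitDenom_ne_zero ha hr hq t
  have hcoef : orbit₃ a E r q t / a + 3 / 2 = r ^ 2 + 1 / (a * orbitDenom a r q t) := by
    rw [← hα, orbit₃]; field_simp; ring
  refine (((hasDerivAt_const_mul (r * q)).cosh.const_mul k).div
    ((hasDerivAt_orbitDenom t).const_mul q) (mul_ne_zero hq hV)).congr_deriv ?_
  rw [hcoef, orbit₂]
  -- clear the denominator `V` while `field_simp` still knows it is nonzero, then expand it
  set V := orbitDenom a r q t with hVdef
  field_simp
  rw [hVdef, orbitDenom]
  field_simp
  linear_combination (-2 * q ^ 2 * k * sinh (r * q * t)) * cosh_sq_sub_sinh_sq (r * q * t)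

lemma hasDerivAt_orbit₂ (ha : a ≠ 0) (hr : r ≠ 0) (hq : q ≠ 0) (hβ : -(a * E + 3 / 2) = q ^ 2)
    (t : ℝ) :
    HasDerivAt (orbit₂ a r q k) (orbit₁ a r q k t * (a * orbit₃ a E r q t + 3 / 2)) t := by
  have hV := orbitDenom_ne_zero ha hr hq t
  have hcoef : a * orbit₃ a E r q t + 3 / 2 = a / orbitDenom a r q t - q ^ 2 := by
    rw [← hβ, orbit₃]; ring
  refine (((hasDerivAt_const_mul (r * q)).sinh.const_mul k).div
    ((hasDerivAt_orbitDenom t).const_mul r) (mul_ne_zero hr hV)).congr_deriv ?_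
  rw [hcoef, orbit₁]
  set V := orbitDenom a r q t with hVdef
  field_simp
  rw [hVdef, orbitDenom]
  field_simp
  linear_combination (2 * k * r ^ 2 * a ^ 2) * cosh_sq_sub_sinh_sq (r * q * t)

lemma hasDerivAt_orbit₃ (ha : a ≠ 0) (hr : r ≠ 0) (hq : q ≠ 0) (hα : E / a + 3 / 2 = r ^ 2)
    (hβ : -(a * E + 3 / 2) = q ^ 2) (hk : k ^ 2 = 3 / 2) (t : ℝ) :
    HasDerivAt (orbit₃ a E r q) ((1 / a - a) * orbit₁ a r q k t * orbit₂ a r q k t) t := by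
  have hV := orbitDenom_ne_zero ha hr hq t
  have hsum : a ^ 2 * r ^ 2 + q ^ 2 = 3 / 2 * (a ^ 2 - 1) := by
    rw [← hα, ← hβ]; field_simp; ring
  refine (((hasDerivAt_const t (1 : ℝ)).div (hasDerivAt_orbitDenom t) hV).const_add E
    ).congr_deriv ?_
  rw [orbit₁, orbit₂]
  field_simp
  linear_combination (-sinh (r * q * t) * cosh (r * q * t)) * hsum
    - sinh (r * q * t) * cosh (r * q * t) * (1 - a ^ 2) * hk

lemma orbit_lightCone (ha : a ≠ 0) (hr : r ≠ 0) (hq : q ≠ 0) (hk : k ^ 2 = 3 / 2) (t : ℝ) :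
    a * orbit₁ a r q k t ^ 2 + 1 / a * orbit₂ a r q k t ^ 2 = 3 * (orbit₃ a E r q t - E) := by
  have hV := orbitDenom_ne_zero ha hr hq t
  simp only [orbit₁, orbit₂, orbit₃, div_pow, mul_pow, hk]
  set V := orbitDenom a r q t with hVdef
  field_simp
  rw [hVdef, orbitDenom]
  field_simp
  ring

lemma orbit₂_eq_zero_iff (ha : a ≠ 0) (hr : r ≠ 0) (hq : q ≠ 0) (hk : k ≠ 0) {t : ℝ} :
    orbit₂ a r q k t = 0 ↔ t = 0 := by
  simp [orbit₂, hk, hr, hq, orbitDenom_ne_zero ha hr hq t, sinh_eq_zero]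

lemma tendsto_orbitDenom_cocompact (ha : 0 < a) (hr : r ≠ 0) (hq : q ≠ 0) :
    Tendsto (orbitDenom a r q) (cocompact ℝ) atTop := by
  have hX : Tendsto (fun t => cosh (r * q * t)) (cocompact ℝ) atTop :=
    Real.tendsto_cosh_cocompact.comp (tendsto_cocompact_mul_left₀ (mul_ne_zero hr hq))
  refine tendsto_atTop_mono (fun t => ?_)
    (hX.const_mul_atTop (by positivity : 0 < a / (2 * q ^ 2)))
  have hY : 0 ≤ sinh (r * q * t) ^ 2 / (2 * a * r ^ 2) := by positivity
  calc a / (2 * q ^ 2) * cosh (r * q * t)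
      ≤ a / (2 * q ^ 2) * cosh (r * q * t) ^ 2 := by
        gcongr; exact le_self_pow₀ (one_le_cosh _) two_ne_zero
    _ ≤ orbitDenom a r q t := by rw [orbitDenom, div_mul_eq_mul_div]; linarith

lemma tendsto_orbit_cocompact (ha : 0 < a) (hr : r ≠ 0) (hq : q ≠ 0) (hk : k ^ 2 = 3 / 2) :
    Tendsto (fun t => (orbit₁ a r q k t, orbit₂ a r q k t, orbit₃ a E r q t)) (cocompact ℝ)
      (𝓝 (0, 0, E)) := by
  have h₃ : Tendsto (fun t => orbit₃ a E r q t - E) (cocompact ℝ) (𝓝 0) := by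
    refine (tendsto_orbitDenom_cocompact ha hr hq).inv_tendsto_atTop.congr fun t => ?_
    simp [orbit₃]
  have h₁ : Tendsto (orbit₁ a r q k) (cocompact ℝ) (𝓝 0) := by
    refine tendsto_zero_of_sq_le (by simpa using (h₃.const_mul 3).div_const a) (fun t => ?_)
    rw [← orbit_lightCone ha.ne' hr hq hk t]
    field_simp
    nlinarith [sq_nonneg (orbit₂ a r q k t)]
  have h₂ : Tendsto (orbit₂ a r q k) (cocompact ℝ) (𝓝 0) := by
    refine tendsto_zero_of_sq_le (by simpa using (h₃.const_mul 3).const_mul a) (fun t => ?_)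
    rw [← orbit_lightCone ha.ne' hr hq hk t]
    field_simp
    nlinarith [sq_nonneg (orbit₁ a r q k t)]
  exact h₁.prodMk_nhds (h₂.prodMk_nhds (by simpa using h₃.add_const E))

end ReducedFefferman

open ReducedFefferman

/-- For `a > √3` there is a nonconstant light-like solution of the reduced Fefferman
equations with `P = 1` which is homoclinic to the equilibrium
`E_a = (0, 0, -(3/8)(a + 1/a))` on the light cone. -/
theorem homoclinic_orbit_exists (a : ℝ) (ha : Real.sqrt 3 < a) :
    ∃ M₁ M₂ M₃ : ℝ → ℝ,
      (∀ t, HasDerivAt M₁ (-(M₂ t) * (M₃ t / a + 3/2)) t) ∧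
      (∀ t, HasDerivAt M₂ (M₁ t * (a * M₃ t + 3/2)) t) ∧
      (∀ t, HasDerivAt M₃ ((1/a - a) * M₁ t * M₂ t) t) ∧
      (∃ t s : ℝ, (M₁ t, M₂ t, M₃ t) ≠ (M₁ s, M₂ s, M₃ s)) ∧
      (∀ t, (1/2) * (a * M₁ t ^ 2 + (1/a) * M₂ t ^ 2 - 3 * M₃ t
        - (9/8) * (a + 1/a)) = 0) ∧
      Filter.Tendsto (fun t => (M₁ t, M₂ t, M₃ t)) Filter.atTop
        (nhds (0, 0, -(3/8) * (a + 1/a))) ∧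
      Filter.Tendsto (fun t => (M₁ t, M₂ t, M₃ t)) Filter.atBot
        (nhds (0, 0, -(3/8) * (a + 1/a))) := by
  have ha₀ : 0 < a := (sqrt_nonneg 3).trans_lt ha
  have ha₃ : 3 < a ^ 2 := (sqrt_lt' ha₀).mp ha
  set E := -(3 / 8) * (a + 1 / a) with hE
  have hα : 0 < E / a + 3 / 2 := by rw [hE]; field_simp; nlinarith
  have hβ : 0 < -(a * E + 3 / 2) := by rw [hE]; field_simp; nlinarith
  set r := √(E / a + 3 / 2)
  set q := √(-(a * E + 3 / 2))
  set k := √(3 / 2)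
  have hr : r ≠ 0 := (sqrt_pos.2 hα).ne'
  have hq : q ≠ 0 := (sqrt_pos.2 hβ).ne'
  have hk : k ^ 2 = 3 / 2 := sq_sqrt (by norm_num)
  have hk₀ : k ≠ 0 := (sqrt_pos.2 (by norm_num)).ne'
  refine ⟨orbit₁ a r q k, orbit₂ a r q k, orbit₃ a E r q,
    hasDerivAt_orbit₁ ha₀.ne' hr hq (sq_sqrt hα.le).symm,
    hasDerivAt_orbit₂ ha₀.ne' hr hq (sq_sqrt hβ.le).symm,
    hasDerivAt_orbit₃ ha₀.ne' hr hq (sq_sqrt hα.le).symm (sq_sqrt hβ.le).symm hk,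
    ⟨1, 0, ne_of_apply_ne (·.2.1) ?_⟩, fun t => ?_,
    (tendsto_orbit_cocompact ha₀ hr hq hk).mono_left atTop_le_cocompact,
    (tendsto_orbit_cocompact ha₀ hr hq hk).mono_left atBot_le_cocompact⟩
  · rw [(orbit₂_eq_zero_iff ha₀.ne' hr hq hk₀).2 rfl]
    exact (orbit₂_eq_zero_iff ha₀.ne' hr hq hk₀).not.2 one_ne_zero
  · linear_combination (1 / 2) * orbit_lightCone (E := E) ha₀.ne' hr hq hk t - 3 / 2 * hE
end

section
/- Let a be a real number with 1/√3 < a < √3 and let k > (9/64)(a + 1/a)². Then there exists a nonconstant periodic differentiable solution (M₁, M₂, M₃) : ℝ → ℝ³ of the reduced Fefferman equations with P = 1, i.e. M₁' = -M₂(M₃/a + 3/2), M₂' = M₁(a·M₃ + 3/2), M₃' = (1/a - a)·M₁·M₂, which satisfies H_a(M₁(t), M₂(t), M₃(t), 1) = 0 and M₁(t)² + M₂(t)² + M₃(t)² = k for all t. -/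
/-!
On the light cone `H_a = 0` with `K = k`, the two constraints express `M₁²` and `M₂²` through
`u = M₃`: for `a > 1` and `c = (9/8)(a + 1/a)`,
`(a² - 1) M₁² = u² + 3au + ac - k` and `(a² - 1) M₂² = -a (au² + 3u + c - ak)`.
The hypothesis on `k` says that the first quadratic is negative at the equilibrium value
`u = -c/3`, so its larger root `ρ` exceeds `-c/3`; the second quadratic is then negative at `ρ`,
its larger root `σ` exceeds `ρ`, and `M₃` oscillates in `[ρ, σ]`. Writing
`M₃ = ρ + (σ - ρ) sin² θ` makes both square roots explicit, and the equations reduce to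
`θ' = F(θ)` for a positive `2π`-periodic `F`, solved by inverting `t = ∫ dθ / F`.
The case `a < 1` follows from the symmetry `(M₁, M₂, M₃, t, a) ↦ (M₂, M₁, M₃, -t, 1/a)`,
and for `a = 1` the orbit is a uniform rotation.
-/

open Real Function Filter

theorem Function.Periodic.exists_ode_solution_of_pos {F : ℝ → ℝ} {p : ℝ} (hper : Periodic F p)
    (hp : 0 < p) (hF : Continuous F) (hF₀ : ∀ x, 0 < F x) :
    ∃ (φ : ℝ → ℝ) (T : ℝ), 0 < T ∧ Surjective φ ∧ (∀ t, HasDerivAt φ (F (φ t)) t) ∧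
      ∀ t, φ (t + T) = φ t + p := by
  set G : ℝ → ℝ := fun x => ∫ y in 0..x, (F y)⁻¹
  have hinv : Continuous fun x => (F x)⁻¹ := hF.inv₀ fun x => (hF₀ x).ne'
  have hinv_per : Periodic (fun x => (F x)⁻¹) p := hper.comp _
  have hG' : ∀ x, HasDerivAt G (F x)⁻¹ x := fun x => (hinv.integral_hasStrictDerivAt 0 x).hasDerivAt
  have hG_mono : StrictMono G := strictMono_of_hasDerivAt_pos hG' fun x => inv_pos.2 (hF₀ x)
  have hG_surj : Surjective G :=
    (continuous_iff_continuousAt.2 fun x => (hG' x).continuousAt).surjective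
      (hinv_per.tendsto_atTop_intervalIntegral_of_pos' (hinv.intervalIntegrable _ _)
        (fun x => inv_pos.2 (hF₀ x)) hp)
      (hinv_per.tendsto_atBot_intervalIntegral_of_pos' (hinv.intervalIntegrable _ _)
        (fun x => inv_pos.2 (hF₀ x)) hp)
  have hG_add : ∀ x, G (x + p) = G x + G p := fun x => by
    simpa using hinv_per.intervalIntegral_add_eq_add 0 x fun _ _ => hinv.intervalIntegrable _ _
  set e := hG_mono.orderIsoOfSurjective G hG_surj
  have hGe : ∀ t, G (e.symm t) = t := e.apply_symm_apply
  refine ⟨e.symm, G p, ?_, e.symm.surjective, fun t => ?_, fun t => ?_⟩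
  · simpa [G] using hG_mono hp
  · simpa using (hG' (e.symm t)).of_local_left_inverse e.symm.continuous.continuousAt
      (inv_ne_zero (hF₀ _).ne') (Eventually.of_forall hGe)
  · exact hG_mono.injective (by rw [hGe, hG_add, hGe])

theorem exists_roots_of_quadratic_neg {β γ w : ℝ} (h : w ^ 2 + β * w + γ < 0) :
    ∃ r r', r < w ∧ w < r' ∧ r + r' = -β ∧ r * r' = γ := by
  have hD : (2 * w + β) ^ 2 < β ^ 2 - 4 * γ := by nlinarith
  have hs : |2 * w + β| < √(β ^ 2 - 4 * γ) := by
    rwa [← sqrt_sq_eq_abs, sqrt_lt_sqrt_iff (sq_nonneg _)]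
  have hs2 : √(β ^ 2 - 4 * γ) ^ 2 = β ^ 2 - 4 * γ := sq_sqrt (by nlinarith)
  refine ⟨(-β - √(β ^ 2 - 4 * γ)) / 2, (-β + √(β ^ 2 - 4 * γ)) / 2, ?_, ?_, by ring, ?_⟩
  · linarith [neg_abs_le (2 * w + β)]
  · linarith [le_abs_self (2 * w + β)]
  · linear_combination (-1 / 4 : ℝ) * hs2

noncomputable section

namespace Fefferman

def HasPeriodicLightlikeOrbit (a k : ℝ) : Prop :=
  ∃ (M₁ M₂ M₃ : ℝ → ℝ) (T : ℝ), 0 < T ∧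
    (∀ t, HasDerivAt M₁ (-(M₂ t) * (M₃ t / a + 3/2)) t) ∧
    (∀ t, HasDerivAt M₂ (M₁ t * (a * M₃ t + 3/2)) t) ∧
    (∀ t, HasDerivAt M₃ ((1/a - a) * M₁ t * M₂ t) t) ∧
    (∃ t s : ℝ, (M₁ t, M₂ t, M₃ t) ≠ (M₁ s, M₂ s, M₃ s)) ∧
    (∀ t, M₁ (t + T) = M₁ t ∧ M₂ (t + T) = M₂ t ∧ M₃ (t + T) = M₃ t) ∧
    (∀ t, (1/2) * (a * M₁ t ^ 2 + (1/a) * M₂ t ^ 2 - 3 * M₃ t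
      - (9/8) * (a + 1/a)) = 0) ∧
    (∀ t, M₁ t ^ 2 + M₂ t ^ 2 + M₃ t ^ 2 = k)

theorem exists_turning_points {a c k : ℝ} (ha : 1 < a) (hk : (c / 3) ^ 2 < k) :
    ∃ ρ σ, ρ < σ ∧ 0 < 3 * a + 2 * ρ ∧ 0 < ρ + σ + 3 / a ∧
      ρ ^ 2 + 3 * a * ρ + a * c - k = 0 ∧ a * σ ^ 2 + 3 * σ + c - a * k = 0 := by
  have ha₀ : 0 < a := by positivity
  obtain ⟨r₁, ρ, hr₁, hρ, hsum₁, hprod₁⟩ :=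
    exists_roots_of_quadratic_neg (β := 3 * a) (γ := a * c - k) (w := -c / 3) (by nlinarith)
  have hρ_root : ρ ^ 2 + 3 * a * ρ + a * c - k = 0 := by
    linear_combination ρ * hsum₁ - hprod₁
  have hneg : ρ ^ 2 + 3 / a * ρ + (c - a * k) / a < 0 := by
    have key : ρ ^ 2 + 3 / a * ρ + (c - a * k) / a = (1 - a ^ 2) * (3 * ρ + c) / a := by
      field_simp
      linear_combination a * hρ_root
    rw [key]
    exact div_neg_of_neg_of_pos (mul_neg_of_neg_of_pos (by nlinarith) (by linarith)) ha₀
  obtain ⟨r₂, σ, hr₂, hσ, hsum₂, hprod₂⟩ := exists_roots_of_quadratic_neg hneg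
  refine ⟨ρ, σ, hσ, by linarith, by linarith, hρ_root, ?_⟩
  field_simp at hsum₂ hprod₂
  linear_combination σ * hsum₂ - hprod₂

def height (ρ σ θ : ℝ) : ℝ := ρ + (σ - ρ) * sin θ ^ 2

/- `-(3a + ρ)` and `-(3/a + σ)` are the smaller roots of the two quadratics in `u = M₃`. -/
def orbit₁ (a ρ σ θ : ℝ) : ℝ :=
  -(√((σ - ρ) / (a ^ 2 - 1)) * sin θ * √(height ρ σ θ + (3 * a + ρ)))

def orbit₂ (a ρ σ θ : ℝ) : ℝ :=
  a * √((σ - ρ) / (a ^ 2 - 1)) * cos θ * √(height ρ σ θ + (3 / a + σ))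

def angularSpeed (a ρ σ θ : ℝ) : ℝ :=
  √(height ρ σ θ + (3 * a + ρ)) * √(height ρ σ θ + (3 / a + σ)) / 2

section Orbit

variable {a ρ σ : ℝ}

theorem height_sub_left (θ : ℝ) : height ρ σ θ - ρ = (σ - ρ) * sin θ ^ 2 := by
  rw [height]; ring

theorem sub_height (θ : ℝ) : σ - height ρ σ θ = (σ - ρ) * cos θ ^ 2 := by
  rw [height, cos_sq']; ring

theorem left_le_height (hρσ : ρ ≤ σ) (θ : ℝ) : ρ ≤ height ρ σ θ := by
  rw [height]; nlinarith [sq_nonneg (sin θ)]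

theorem height_add_pos (hρσ : ρ ≤ σ) {e : ℝ} (he : 0 < ρ + e) (θ : ℝ) :
    0 < height ρ σ θ + e := by
  linarith [left_le_height hρσ θ]

theorem hasDerivAt_height (θ : ℝ) :
    HasDerivAt (height ρ σ) ((σ - ρ) * (2 * sin θ * cos θ)) θ := by
  refine ((((hasDerivAt_sin θ).fun_pow 2).const_mul (σ - ρ)).const_add ρ).congr_deriv ?_
  norm_num

theorem hasDerivAt_sqrt_height_add {e θ : ℝ} (h : 0 < height ρ σ θ + e) :
    HasDerivAt (fun θ => √(height ρ σ θ + e))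
      ((σ - ρ) * (2 * sin θ * cos θ) / (2 * √(height ρ σ θ + e))) θ :=
  ((hasDerivAt_height θ).add_const e).sqrt h.ne'

theorem continuous_angularSpeed : Continuous (angularSpeed a ρ σ) := by
  unfold angularSpeed height; fun_prop

theorem angularSpeed_pos {θ : ℝ} (hP : 0 < height ρ σ θ + (3 * a + ρ))
    (hQ : 0 < height ρ σ θ + (3 / a + σ)) : 0 < angularSpeed a ρ σ θ :=
  div_pos (mul_pos (sqrt_pos.2 hP) (sqrt_pos.2 hQ)) two_pos

theorem angularSpeed_periodic : Periodic (angularSpeed a ρ σ) (2 * π) := by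
  intro θ; simp only [angularSpeed, height, sin_add_two_pi]

theorem orbit₁_periodic : Periodic (orbit₁ a ρ σ) (2 * π) := by
  intro θ; simp only [orbit₁, height, sin_add_two_pi]

theorem orbit₂_periodic : Periodic (orbit₂ a ρ σ) (2 * π) := by
  intro θ; simp only [orbit₂, height, sin_add_two_pi, cos_add_two_pi]

theorem height_periodic : Periodic (height ρ σ) (2 * π) := by
  intro θ; simp only [height, sin_add_two_pi]

theorem sq_orbit₁ (ha : 1 < a) (hρσ : ρ ≤ σ) {θ : ℝ} (hP : 0 ≤ height ρ σ θ + (3 * a + ρ)) :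
    (a ^ 2 - 1) * orbit₁ a ρ σ θ ^ 2 = (height ρ σ θ - ρ) * (height ρ σ θ + (3 * a + ρ)) := by
  have ha₁ : 0 < a ^ 2 - 1 := by nlinarith
  rw [orbit₁, neg_sq, mul_pow, mul_pow, sq_sqrt hP, sq_sqrt (div_nonneg (sub_nonneg.2 hρσ) ha₁.le),
    height_sub_left]
  field_simp

theorem sq_orbit₂ (ha : 1 < a) (hρσ : ρ ≤ σ) {θ : ℝ} (hQ : 0 ≤ height ρ σ θ + (3 / a + σ)) :
    (a ^ 2 - 1) * orbit₂ a ρ σ θ ^ 2 = a * (σ - height ρ σ θ) * (a * height ρ σ θ + 3 + a * σ) := by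
  have ha₁ : 0 < a ^ 2 - 1 := by nlinarith
  rw [orbit₂, mul_pow, mul_pow, mul_pow, sq_sqrt hQ, sq_sqrt (div_nonneg (sub_nonneg.2 hρσ) ha₁.le),
    sub_height]
  field_simp
  ring

variable {φ : ℝ → ℝ} {t : ℝ}

theorem hasDerivAt_orbit₁_comp (ha : a ≠ 0) (hP : 0 < height ρ σ (φ t) + (3 * a + ρ))
    (hφ : HasDerivAt φ (angularSpeed a ρ σ (φ t)) t) :
    HasDerivAt (fun t => orbit₁ a ρ σ (φ t))
      (-orbit₂ a ρ σ (φ t) * (height ρ σ (φ t) / a + 3 / 2)) t := by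
  have hd : HasDerivAt (orbit₁ a ρ σ) _ (φ t) :=
    (((hasDerivAt_sin _).const_mul _).fun_mul (hasDerivAt_sqrt_height_add hP)).fun_neg
  refine (hd.comp t hφ).congr_deriv ?_
  have hsq := sq_sqrt hP.le
  have hne := (sqrt_pos.2 hP).ne'
  have hu := height_sub_left (ρ := ρ) (σ := σ) (φ t)
  simp only [orbit₂, angularSpeed]
  generalize √((σ - ρ) / (a ^ 2 - 1)) = s
  generalize √(height ρ σ (φ t) + (3 * a + ρ)) = P at hsq hne ⊢
  generalize √(height ρ σ (φ t) + (3 / a + σ)) = Q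
  generalize height ρ σ (φ t) = u at hsq hu ⊢
  field_simp
  linear_combination (-(s * cos (φ t) * Q)) * hsq + s * cos (φ t) * Q * hu

theorem hasDerivAt_orbit₂_comp (ha : a ≠ 0) (hQ : 0 < height ρ σ (φ t) + (3 / a + σ))
    (hφ : HasDerivAt φ (angularSpeed a ρ σ (φ t)) t) :
    HasDerivAt (fun t => orbit₂ a ρ σ (φ t))
      (orbit₁ a ρ σ (φ t) * (a * height ρ σ (φ t) + 3 / 2)) t := by
  have hd : HasDerivAt (orbit₂ a ρ σ) _ (φ t) :=
    ((hasDerivAt_cos _).const_mul _).fun_mul (hasDerivAt_sqrt_height_add hQ)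
  refine (hd.comp t hφ).congr_deriv ?_
  have hsq : a * √(height ρ σ (φ t) + (3 / a + σ)) ^ 2 = a * height ρ σ (φ t) + 3 + a * σ := by
    rw [sq_sqrt hQ.le]; field_simp; ring
  have hne := (sqrt_pos.2 hQ).ne'
  have hu := sub_height (ρ := ρ) (σ := σ) (φ t)
  simp only [orbit₁, angularSpeed]
  generalize √((σ - ρ) / (a ^ 2 - 1)) = s
  generalize √(height ρ σ (φ t) + (3 * a + ρ)) = P
  generalize √(height ρ σ (φ t) + (3 / a + σ)) = Q at hsq hne ⊢
  generalize height ρ σ (φ t) = u at hsq hu ⊢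
  field_simp
  linear_combination (-(s * sin (φ t) * P)) * hsq - a * s * sin (φ t) * P * hu

theorem hasDerivAt_height_comp (ha : 1 < a) (hρσ : ρ ≤ σ)
    (hφ : HasDerivAt φ (angularSpeed a ρ σ (φ t)) t) :
    HasDerivAt (fun t => height ρ σ (φ t))
      ((1 / a - a) * orbit₁ a ρ σ (φ t) * orbit₂ a ρ σ (φ t)) t := by
  refine ((hasDerivAt_height (φ t)).comp t hφ).congr_deriv ?_
  have ha₁ : 0 < a ^ 2 - 1 := by nlinarith
  have hs : √((σ - ρ) / (a ^ 2 - 1)) ^ 2 * (a ^ 2 - 1) = σ - ρ := by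
    rw [sq_sqrt (div_nonneg (sub_nonneg.2 hρσ) ha₁.le)]; field_simp
  simp only [orbit₁, orbit₂, angularSpeed]
  generalize √((σ - ρ) / (a ^ 2 - 1)) = s at hs ⊢
  generalize √(height ρ σ (φ t) + (3 * a + ρ)) = P
  generalize √(height ρ σ (φ t) + (3 / a + σ)) = Q
  field_simp
  linear_combination (-(sin (φ t) * cos (φ t) * P * Q)) * hs

variable {c k : ℝ}

theorem hamiltonian_orbit (ha : 1 < a) (hρσ : ρ ≤ σ) {θ : ℝ}
    (hP : 0 ≤ height ρ σ θ + (3 * a + ρ)) (hQ : 0 ≤ height ρ σ θ + (3 / a + σ))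
    (hρ : ρ ^ 2 + 3 * a * ρ + a * c - k = 0) (hσ : a * σ ^ 2 + 3 * σ + c - a * k = 0) :
    a * orbit₁ a ρ σ θ ^ 2 + 1 / a * orbit₂ a ρ σ θ ^ 2 - 3 * height ρ σ θ - c = 0 := by
  have ha₁ : a ^ 2 - 1 ≠ 0 := by nlinarith
  have h₁ := sq_orbit₁ ha hρσ hP
  have h₂ := sq_orbit₂ ha hρσ hQ
  field_simp
  refine mul_left_cancel₀ ha₁ ?_
  linear_combination a ^ 2 * h₁ + h₂ - a ^ 2 * hρ + a * hσ

theorem casimir_orbit (ha : 1 < a) (hρσ : ρ ≤ σ) {θ : ℝ}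
    (hP : 0 ≤ height ρ σ θ + (3 * a + ρ)) (hQ : 0 ≤ height ρ σ θ + (3 / a + σ))
    (hρ : ρ ^ 2 + 3 * a * ρ + a * c - k = 0) (hσ : a * σ ^ 2 + 3 * σ + c - a * k = 0) :
    orbit₁ a ρ σ θ ^ 2 + orbit₂ a ρ σ θ ^ 2 + height ρ σ θ ^ 2 = k := by
  have ha₁ : a ^ 2 - 1 ≠ 0 := by nlinarith
  have h₁ := sq_orbit₁ ha hρσ hP
  have h₂ := sq_orbit₂ ha hρσ hQ
  refine mul_left_cancel₀ ha₁ ?_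
  linear_combination h₁ + h₂ - hρ + a * hσ

end Orbit

theorem hasPeriodicLightlikeOrbit_of_one_lt {a k : ℝ} (ha : 1 < a)
    (hk : 9 / 64 * (a + 1 / a) ^ 2 < k) : HasPeriodicLightlikeOrbit a k := by
  obtain ⟨ρ, σ, hρσ, h₁, h₂, hρ, hσ⟩ :=
    exists_turning_points (c := 9 / 8 * (a + 1 / a)) ha (by convert hk using 1; ring)
  have hP : ∀ θ, 0 < height ρ σ θ + (3 * a + ρ) := height_add_pos hρσ.le (by linarith)
  have hQ : ∀ θ, 0 < height ρ σ θ + (3 / a + σ) := height_add_pos hρσ.le (by linarith)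
  obtain ⟨φ, T, hT, hφ_surj, hφ, hφ_per⟩ := angularSpeed_periodic.exists_ode_solution_of_pos
    two_pi_pos continuous_angularSpeed fun θ => angularSpeed_pos (hP θ) (hQ θ)
  obtain ⟨t₀, ht₀⟩ := hφ_surj 0
  obtain ⟨t₁, ht₁⟩ := hφ_surj (π / 2)
  refine ⟨fun t => orbit₁ a ρ σ (φ t), fun t => orbit₂ a ρ σ (φ t), fun t => height ρ σ (φ t), T,
    hT, fun t => hasDerivAt_orbit₁_comp (by positivity) (hP _) (hφ t),
    fun t => hasDerivAt_orbit₂_comp (by positivity) (hQ _) (hφ t),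
    fun t => hasDerivAt_height_comp ha hρσ.le (hφ t), ⟨t₀, t₁, fun h => hρσ.ne ?_⟩,
    fun t => ?_, fun t => ?_, fun t => casimir_orbit ha hρσ.le (hP _).le (hQ _).le hρ hσ⟩
  · simpa [ht₀, ht₁, height] using congrArg (fun p => p.2.2) h
  · simp only [hφ_per, orbit₁_periodic (φ t), orbit₂_periodic (φ t), height_periodic (φ t),
      and_self]
  · rw [hamiltonian_orbit ha hρσ.le (hP _).le (hQ _).le hρ hσ, mul_zero]

theorem hasPeriodicLightlikeOrbit_one {k : ℝ} (hk : 9 / 16 < k) :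
    HasPeriodicLightlikeOrbit 1 k := by
  set w := √k
  have hw : w ^ 2 = k := sq_sqrt (by linarith)
  have hw₀ : 3 / 4 < w := (lt_sqrt (by norm_num)).2 (by linarith)
  set r := √(3 * w - 9 / 4)
  have hr : r ^ 2 = 3 * w - 9 / 4 := sq_sqrt (by linarith)
  have hr₀ : 0 < r := sqrt_pos.2 (by linarith)
  have hwT : ∀ t, w * (t + 2 * π / w) = w * t + 2 * π := fun t => by field_simp
  refine ⟨fun t => r * cos (w * t), fun t => r * sin (w * t), fun _ => w - 3 / 2, 2 * π / w,
    by positivity, fun t => ?_, fun t => ?_, fun t => ?_, ⟨0, π / w, fun h => ?_⟩,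
    fun t => ?_, fun t => ?_, fun t => ?_⟩
  · exact ((((hasDerivAt_id' t).const_mul w).cos).const_mul r).congr_deriv (by ring)
  · exact ((((hasDerivAt_id' t).const_mul w).sin).const_mul r).congr_deriv (by ring)
  · exact (hasDerivAt_const t _).congr_deriv (by ring)
  · have h₁ := congrArg Prod.fst h
    simp only [mul_zero, cos_zero, mul_div_cancel₀ π (by positivity : w ≠ 0), cos_pi] at h₁
    linarith
  · simp only [hwT, cos_add_two_pi, sin_add_two_pi, and_self]
  · linear_combination (r ^ 2 / 2) * sin_sq_add_cos_sq (w * t) + hr / 2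
  · linear_combination r ^ 2 * sin_sq_add_cos_sq (w * t) + hr + hw

theorem HasPeriodicLightlikeOrbit.of_one_div {a k : ℝ} (h : HasPeriodicLightlikeOrbit (1 / a) k) :
    HasPeriodicLightlikeOrbit a k := by
  obtain ⟨N₁, N₂, N₃, T, hT, hN₁, hN₂, hN₃, ⟨t, s, hts⟩, hper, hH, hK⟩ := h
  refine ⟨fun t => N₂ (-t), fun t => N₁ (-t), fun t => N₃ (-t), T, hT, fun t => ?_, fun t => ?_,
    fun t => ?_, ⟨-t, -s, ?_⟩, fun t => ?_, fun t => ?_, fun t => ?_⟩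
  · exact ((hN₂ (-t)).comp t (hasDerivAt_neg t)).congr_deriv (by ring)
  · exact ((hN₁ (-t)).comp t (hasDerivAt_neg t)).congr_deriv
      (by simp only [one_div, div_inv_eq_mul]; ring)
  · exact ((hN₃ (-t)).comp t (hasDerivAt_neg t)).congr_deriv
      (by simp only [one_div_one_div]; ring)
  · refine fun h => hts ?_
    simp only [neg_neg, Prod.mk.injEq] at h ⊢
    tauto
  · obtain ⟨h₁, h₂, h₃⟩ := hper (-t - T)
    rw [sub_add_cancel] at h₁ h₂ h₃
    simp only [neg_add', ← h₁, ← h₂, ← h₃, and_self]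
  · have h := hH (-t)
    rw [one_div_one_div] at h
    linear_combination h
  · linear_combination hK (-t)

end Fefferman

end

theorem periodic_orbit_exists_general (a : ℝ)
    (ha₁ : 1 / Real.sqrt 3 < a)
    (k : ℝ) (hk : (9/64) * (a + 1/a) ^ 2 < k) :
    ∃ (M₁ M₂ M₃ : ℝ → ℝ) (T : ℝ), 0 < T ∧
      (∀ t, HasDerivAt M₁ (-(M₂ t) * (M₃ t / a + 3/2)) t) ∧
      (∀ t, HasDerivAt M₂ (M₁ t * (a * M₃ t + 3/2)) t) ∧
      (∀ t, HasDerivAt M₃ ((1/a - a) * M₁ t * M₂ t) t) ∧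
      (∃ t s : ℝ, (M₁ t, M₂ t, M₃ t) ≠ (M₁ s, M₂ s, M₃ s)) ∧
      (∀ t, M₁ (t + T) = M₁ t ∧ M₂ (t + T) = M₂ t ∧ M₃ (t + T) = M₃ t) ∧
      (∀ t, (1/2) * (a * M₁ t ^ 2 + (1/a) * M₂ t ^ 2 - 3 * M₃ t
        - (9/8) * (a + 1/a)) = 0) ∧
      (∀ t, M₁ t ^ 2 + M₂ t ^ 2 + M₃ t ^ 2 = k) := by
  have ha : 0 < a := lt_trans (by positivity) ha₁
  show Fefferman.HasPeriodicLightlikeOrbit a k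
  rcases lt_trichotomy a 1 with h | rfl | h
  · refine .of_one_div (Fefferman.hasPeriodicLightlikeOrbit_of_one_lt (one_lt_one_div ha h) ?_)
    rwa [one_div_one_div, add_comm]
  · exact Fefferman.hasPeriodicLightlikeOrbit_one (by norm_num at hk; linarith)
  · exact Fefferman.hasPeriodicLightlikeOrbit_of_one_lt h hk

/-- For `1/√3 < a < √3` and any `k > (9/64)(a + 1/a)²` (the value of the Casimir `K` at the
unique equilibrium on the light cone), there is a nonconstant periodic light-like solution
of the reduced Fefferman equations with `P = 1` lying on the level set `K = k`. -/
theorem periodic_orbit_exists (a : ℝ)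
    (ha₁ : 1 / Real.sqrt 3 < a) (ha₂ : a < Real.sqrt 3)
    (k : ℝ) (hk : (9/64) * (a + 1/a) ^ 2 < k) :
    ∃ (M₁ M₂ M₃ : ℝ → ℝ) (T : ℝ), 0 < T ∧
      (∀ t, HasDerivAt M₁ (-(M₂ t) * (M₃ t / a + 3/2)) t) ∧
      (∀ t, HasDerivAt M₂ (M₁ t * (a * M₃ t + 3/2)) t) ∧
      (∀ t, HasDerivAt M₃ ((1/a - a) * M₁ t * M₂ t) t) ∧
      (∃ t s : ℝ, (M₁ t, M₂ t, M₃ t) ≠ (M₁ s, M₂ s, M₃ s)) ∧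
      (∀ t, M₁ (t + T) = M₁ t ∧ M₂ (t + T) = M₂ t ∧ M₃ (t + T) = M₃ t) ∧
      (∀ t, (1/2) * (a * M₁ t ^ 2 + (1/a) * M₂ t ^ 2 - 3 * M₃ t
        - (9/8) * (a + 1/a)) = 0) ∧
      (∀ t, M₁ t ^ 2 + M₂ t ^ 2 + M₃ t ^ 2 = k) :=
  periodic_orbit_exists_general a ha₁ k hk
end

section
/- Let α, β be purely imaginary quaternions with ‖α‖ = ‖β‖ = 1. Then for every real t, exp(tα) · exp(-tβ) = (1/2)(1 - αβ) + cos(2t) · (1/2)(1 + αβ) + sin(2t) · (1/2)(α - β). -/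
open Quaternion

theorem Quaternion.exp_smul_of_re_eq_zero_of_norm_eq_one {α : ℍ[ℝ]} (hα : α.re = 0)
    (hα1 : ‖α‖ = 1) (t : ℝ) :
    NormedSpace.exp (t • α) = Real.cos t • (1 : ℍ[ℝ]) + Real.sin t • α := by
  have hnorm : ‖t • α‖ = |t| := by rw [norm_smul, hα1, mul_one, Real.norm_eq_abs]
  have hsinc : Real.sin |t| / |t| * t = Real.sin t := by
    rcases eq_or_ne t 0 with rfl | ht
    · simp
    rcases abs_choice t with h | h
    · rw [h]; field_simp
    · rw [h, Real.sin_neg]; field_simp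
  rw [Quaternion.exp_of_re_eq_zero _ (by simp [hα]), hnorm, Real.cos_abs, smul_smul, hsinc,
    ← Quaternion.algebraMap_def, Algebra.algebraMap_eq_smul_one]

/-- For purely imaginary unit quaternions `α, β`, the curve `t ↦ exp(tα)·exp(-tβ)` is
`(1/2)(1 - αβ) + cos(2t)·(1/2)(1 + αβ) + sin(2t)·(1/2)(α - β)`. -/
theorem exp_mul_exp_neg_eq_circle (α β : ℍ[ℝ])
    (hα : α.re = 0) (hβ : β.re = 0) (hα1 : ‖α‖ = 1) (hβ1 : ‖β‖ = 1) (t : ℝ) :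
    NormedSpace.exp (t • α) * NormedSpace.exp (-(t • β)) =
      (1/2 : ℝ) • (1 - α * β)
      + Real.cos (2 * t) • ((1/2 : ℝ) • (1 + α * β))
      + Real.sin (2 * t) • ((1/2 : ℝ) • (α - β)) := by
  rw [← neg_smul, exp_smul_of_re_eq_zero_of_norm_eq_one hα hα1,
    exp_smul_of_re_eq_zero_of_norm_eq_one hβ hβ1, Real.cos_neg, Real.sin_neg,
    Real.cos_two_mul, Real.sin_two_mul]
  simp only [add_mul, mul_add, smul_mul_smul_comm, one_mul, mul_one]
  -- both sides are `c² - s² αβ + c s (α - β)` once `c² + s² = 1` is used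
  match_scalars <;> linarith [Real.sin_sq_add_cos_sq t]
end

section
/- Let α, β be purely imaginary quaternions with ‖α‖ = ‖β‖ = 1, and set v = (1/2)(1 + αβ) and w = (1/2)(α - β). Then v = -α·w; consequently ‖v‖ = ‖w‖ and the Euclidean inner product of v and w in ℍ ≅ ℝ⁴ is zero. In particular, if v ≠ 0, the curve t ↦ exp(tα)·exp(-tβ) traces a geometric circle of radius ‖v‖ centered at (1/2)(1 - αβ). -/
open Quaternion RealInnerProductSpace

/-!
Since `α² = β² = -1`, the element `p = (1 - αβ)/2` intertwines `β` with `α` and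
`v = (1 + αβ)/2` intertwines `-β` with `α`. As `p + v = 1`, this gives
`exp(tα) exp(-tβ) = p + exp(2tα) v = p + cos(2t) v + sin(2t) αv`, and `αv = w`.
-/

section SqrtNegOne

variable {R : Type*} [Ring R] {a b : R}

theorem semiconjBy_one_sub_mul_of_mul_self_eq_neg_one (ha : a * a = -1) (hb : b * b = -1) :
    SemiconjBy (1 - a * b) b a := by
  simp only [SemiconjBy, sub_mul, mul_sub, one_mul, mul_one, mul_assoc, hb, ← mul_assoc a a, ha]
  noncomm_ring

theorem semiconjBy_one_add_mul_of_mul_self_eq_neg_one (ha : a * a = -1) (hb : b * b = -1) :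
    SemiconjBy (1 + a * b) (-b) a := by
  simp only [SemiconjBy, add_mul, mul_add, mul_neg, one_mul, mul_one, mul_assoc, hb,
    ← mul_assoc a a, ha]
  noncomm_ring

end SqrtNegOne

section BanachAlgebra

open NormedSpace

variable {𝔸 : Type*} [NormedRing 𝔸] [NormedAlgebra ℝ 𝔸] [CompleteSpace 𝔸] {a b : 𝔸}

theorem exp_smul_mul_exp_neg_smul_of_mul_self_eq_neg_one (ha : a * a = -1) (hb : b * b = -1)
    (t : ℝ) :
    exp (t • a) * exp (-(t • b)) =
      (1/2 : ℝ) • (1 - a * b) + exp ((2 * t) • a) * ((1/2 : ℝ) • (1 + a * b)) := by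
  let _ : NormedAlgebra ℚ 𝔸 := NormedAlgebra.restrictScalars ℚ ℝ 𝔸
  set p : 𝔸 := (1/2 : ℝ) • (1 - a * b)
  set v : 𝔸 := (1/2 : ℝ) • (1 + a * b)
  have hpv : p + v = 1 := by
    simp only [p, v, ← smul_add]
    rw [sub_add_add_cancel, ← two_smul ℝ, smul_smul]
    norm_num
  have hp : p * exp (t • b) = exp (t • a) * p :=
    (((semiconjBy_one_sub_mul_of_mul_self_eq_neg_one ha hb).smul_left _).smul_right t).exp_right
  have hv : v * exp (-(t • b)) = exp (t • a) * v := by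
    rw [← smul_neg]
    exact (((semiconjBy_one_add_mul_of_mul_self_eq_neg_one ha hb).smul_left _).smul_right
      t).exp_right
  calc exp (t • a) * exp (-(t • b))
      = exp (t • a) * (p + v) * exp (-(t • b)) := by rw [hpv, mul_one]
    _ = p * (exp (t • b) * exp (-(t • b))) + exp (t • a) * exp (t • a) * v := by
      rw [mul_add, add_mul, ← hp, mul_assoc, mul_assoc, hv, mul_assoc]
    _ = p + exp ((2 * t) • a) * v := by
      rw [← exp_add_of_commute (Commute.refl _).neg_right, ← exp_add_of_commute (Commute.refl _),
        add_neg_cancel, exp_zero, mul_one, ← two_smul ℝ, smul_smul]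

end BanachAlgebra

namespace Quaternion

variable {a : ℍ[ℝ]}

theorem mul_self_eq_neg_one_of_re_eq_zero (ha : a.re = 0) (ha1 : ‖a‖ = 1) : a * a = -1 := by
  rw [← sq, sq_eq_neg_normSq.2 ha, normSq_eq_norm_mul_self, ha1, mul_one, coe_one]

theorem exp_smul_of_re_eq_zero_of_norm_eq_one_s14 (ha : a.re = 0) (ha1 : ‖a‖ = 1) (t : ℝ) :
    NormedSpace.exp (t • a) = Real.cos t + Real.sin t • a := by
  rw [exp_of_re_eq_zero _ (by simp [ha]), norm_smul, ha1, mul_one, Real.norm_eq_abs, Real.cos_abs,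
    smul_smul]
  congr 2
  rcases eq_or_ne t 0 with rfl | ht
  · simp
  rcases abs_choice t with h | h
  · rw [h]; field_simp
  · rw [h, Real.sin_neg]; field_simp

theorem norm_exp_of_re_eq_zero (ha : a.re = 0) : ‖NormedSpace.exp a‖ = 1 := by
  rw [norm_exp, ha, NormedSpace.exp_zero, norm_one]

theorem inner_mul_self_eq_zero_of_re_eq_zero (ha : a.re = 0) (x : ℍ[ℝ]) : ⟪x, a * x⟫ = 0 := by
  rw [inner_def, star_mul, ← mul_assoc, self_mul_star]
  simp [ha]

end Quaternion

/-- For purely imaginary unit quaternions `α, β`, with `v = (1/2)(1 + αβ)` and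
`w = (1/2)(α - β)` one has `v = -α·w`, hence `‖v‖ = ‖w‖` and `⟪v,w⟫ = 0`; in particular,
if `v ≠ 0` the curve `t ↦ exp(tα)·exp(-tβ)` traces a geometric circle of radius `‖v‖`
centered at `p = (1/2)(1 - αβ)`. -/
theorem circle_data (α β : ℍ[ℝ])
    (hα : α.re = 0) (hβ : β.re = 0) (hα1 : ‖α‖ = 1) (hβ1 : ‖β‖ = 1)
    (v w p : ℍ[ℝ])
    (hv : v = (1/2 : ℝ) • (1 + α * β))
    (hw : w = (1/2 : ℝ) • (α - β))
    (hp : p = (1/2 : ℝ) • (1 - α * β)) :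
    v = -α * w ∧ ‖v‖ = ‖w‖ ∧ ⟪v, w⟫ = 0 ∧
      (v ≠ 0 → ∀ t : ℝ,
        (∃ s : ℝ, NormedSpace.exp (t • α) * NormedSpace.exp (-(t • β)) =
          p + Real.cos s • v + Real.sin s • w) ∧
        ‖NormedSpace.exp (t • α) * NormedSpace.exp (-(t • β)) - p‖ = ‖v‖) := by
  have hαα := mul_self_eq_neg_one_of_re_eq_zero hα hα1
  have hββ := mul_self_eq_neg_one_of_re_eq_zero hβ hβ1
  have hwv : w = α * v := by
    rw [hv, hw, mul_smul_comm, mul_add, mul_one, ← mul_assoc, hαα, neg_one_mul, ← sub_eq_add_neg]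
  have hvw : v = -α * w := by rw [hwv, ← mul_assoc, neg_mul, hαα, neg_neg, one_mul]
  refine ⟨hvw, ?_, ?_, fun _ t => ?_⟩
  · rw [hvw, norm_mul, norm_neg, hα1, one_mul]
  · rw [hwv, inner_mul_self_eq_zero_of_re_eq_zero hα]
  have hcurve : NormedSpace.exp (t • α) * NormedSpace.exp (-(t • β)) =
      p + NormedSpace.exp ((2 * t) • α) * v := by
    rw [hp, hv]; exact exp_smul_mul_exp_neg_smul_of_mul_self_eq_neg_one hαα hββ t
  refine ⟨⟨2 * t, ?_⟩, ?_⟩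
  · rw [hcurve, exp_smul_of_re_eq_zero_of_norm_eq_one_s14 hα hα1, add_mul, coe_mul_eq_smul,
      smul_mul_assoc, ← hwv, add_assoc]
  · rw [hcurve, add_sub_cancel_left, norm_mul, norm_exp_of_re_eq_zero (by simp [hα]), one_mul]
end

section
/- Let M₁, M₂, M₃, P be real numbers with (M₁, M₂, M₃) ≠ (0,0,0), satisfying M₁² + M₂² + M₃² = (M₃ - (3/2)P)², and excluding the degenerate case M₁ = M₂ = 0 with P = 0. Set q = M₁·i + M₂·j + M₃·k ∈ ℍ, r = ‖q‖, c = M₃ - (3/2)P, n = q/r, m = (c/r)·k, and p = (1/2)(1 - n·m), v = (1/2)(1 + n·m), w = (1/2)(n - m). Then for all real t, exp(t·q)·exp(-t·c·k) = p + cos(2rt)·v + sin(2rt)·w, with ‖v‖ = ‖w‖ ≠ 0 and ⟨v,w⟩ = 0; moreover v·k and w·k lie in the real span of {v, w}. Hence the chain t ↦ exp(t·q)·exp(-t·c·k) of the standard CR structure (a = 1) traces a geometric circle lying in an affine plane whose direction is a complex line for the complex structure given by right quaternion multiplication by k. -/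
open Quaternion RealInnerProductSpace

/-!
For a unit imaginary quaternion `u` one has `exp (s • u) = cos s + sin s • u`. The light-like
condition says `|c| = ‖q‖ = r`, so `q = r • n` and `c • k = r • m` with `n, m` unit imaginary, and
the chain is `exp ((r t) • n) * exp (-((r t) • m))`. Expanding `(cos + sin • n) (cos - sin • m)`
with the double-angle formulas gives `p + cos (2 r t) • v + sin (2 r t) • w`.

Since `n² = -1`, `1 + n m = -n (n - m)`, i.e. `v = -n w`: left multiplication by the unit `n` is
an isometry, and `⟪n w, w⟫ = re n * ‖w‖² = 0`. Since `m² = -1`, right multiplication by `m` maps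
`v ↦ -w` and `w ↦ v`, and `k` is a real multiple of `m`. Finally `v ≠ 0` exactly when `n ≠ m`,
which is the excluded degenerate case.
-/

theorem cos_add_sin_smul_mul_cos_sub_sin_smul {A : Type*} [Ring A] [Algebra ℝ A]
    (θ : ℝ) (x y : A) :
    (algebraMap ℝ A (Real.cos θ) + Real.sin θ • x) *
        (algebraMap ℝ A (Real.cos θ) - Real.sin θ • y) =
      (1/2 : ℝ) • (1 - x * y) + Real.cos (2 * θ) • ((1/2 : ℝ) • (1 + x * y)) +
        Real.sin (2 * θ) • ((1/2 : ℝ) • (x - y)) := by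
  have h := Real.sin_sq_add_cos_sq θ
  rw [Real.cos_two_mul, Real.sin_two_mul, Algebra.algebraMap_eq_smul_one]
  simp only [add_mul, mul_sub, smul_mul_assoc, mul_smul_comm, one_mul, mul_one]
  linear_combination (norm := module) h • -(x * y)

theorem inv_smul_ne_div_smul {M : Type*} [AddCommGroup M] [Module ℝ M] {x y : M} {r c : ℝ}
    (hr : r ≠ 0) (h : x ≠ c • y) : r⁻¹ • x ≠ (c / r) • y := by
  intro h'
  rw [← smul_inv_smul₀ hr x, h', smul_smul, mul_div_cancel₀ _ hr] at h
  exact h rfl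

section UnitSquares

variable {A : Type*} [Ring A] {n m : A}

theorem one_add_mul_eq_neg_mul_sub (hn : n * n = -1) : 1 + n * m = -(n * (n - m)) := by
  rw [mul_sub, hn]
  abel

theorem sub_mul_eq_one_add_mul (hm : m * m = -1) : (n - m) * m = 1 + n * m := by
  rw [sub_mul, hm]
  abel

theorem one_add_mul_mul_eq_neg_sub (hm : m * m = -1) : (1 + n * m) * m = -(n - m) := by
  rw [add_mul, one_mul, mul_assoc, hm]
  noncomm_ring

theorem mul_smul_mem_span_of_mul_self_eq_neg_one [Algebra ℝ A]
    (hm : m * m = -1) (a : ℝ) :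
    ((1/2 : ℝ) • (1 + n * m)) * (a • m) ∈
        Submodule.span ℝ {(1/2 : ℝ) • (1 + n * m), (1/2 : ℝ) • (n - m)} ∧
      ((1/2 : ℝ) • (n - m)) * (a • m) ∈
        Submodule.span ℝ {(1/2 : ℝ) • (1 + n * m), (1/2 : ℝ) • (n - m)} := by
  simp only [mul_smul_comm, smul_mul_assoc, one_add_mul_mul_eq_neg_sub hm,
    sub_mul_eq_one_add_mul hm, smul_neg]
  exact ⟨Submodule.neg_mem _ (Submodule.smul_mem _ _ (Submodule.subset_span (by simp))),
    Submodule.smul_mem _ _ (Submodule.subset_span (by simp))⟩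

end UnitSquares

namespace Quaternion

theorem mul_self_eq_neg_one_of_re_eq_zero_of_norm_eq_one {u : ℍ[ℝ]} (hre : u.re = 0)
    (hnorm : ‖u‖ = 1) : u * u = -1 := by
  have h := self_mul_star u
  rw [star_eq_neg.mpr hre, normSq_eq_norm_mul_self, hnorm, mul_neg] at h
  rw [← neg_eq_iff_eq_neg, h]
  simp

theorem exp_smul_of_re_eq_zero_of_norm_eq_one_s16 {u : ℍ[ℝ]} (hre : u.re = 0) (hnorm : ‖u‖ = 1)
    (t : ℝ) : NormedSpace.exp (t • u) = ↑(Real.cos t) + Real.sin t • u := by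
  rw [exp_of_re_eq_zero _ (by simp [hre]), norm_smul, hnorm, mul_one, Real.norm_eq_abs,
    Real.cos_abs, smul_smul]
  congr 2
  rcases eq_or_ne t 0 with rfl | ht
  · simp
  rcases abs_choice t with h | h <;> rw [h]
  · field_simp
  · rw [Real.sin_neg, neg_div_neg_eq]
    field_simp

theorem inner_mul_self (a x : ℍ[ℝ]) : ⟪a * x, x⟫ = a.re * ‖x‖ ^ 2 := by
  rw [inner_def, mul_assoc, self_mul_star, mul_coe_eq_smul, re_smul, normSq_eq_norm_mul_self,
    smul_eq_mul]
  ring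

variable {n m : ℍ[ℝ]}

theorem norm_one_add_mul (hre : n.re = 0) (hnorm : ‖n‖ = 1) : ‖1 + n * m‖ = ‖n - m‖ := by
  rw [one_add_mul_eq_neg_mul_sub (mul_self_eq_neg_one_of_re_eq_zero_of_norm_eq_one hre hnorm),
    norm_neg, norm_mul, hnorm, one_mul]

theorem inner_one_add_mul_sub (hre : n.re = 0) (hnorm : ‖n‖ = 1) : ⟪1 + n * m, n - m⟫ = 0 := by
  rw [one_add_mul_eq_neg_mul_sub (mul_self_eq_neg_one_of_re_eq_zero_of_norm_eq_one hre hnorm),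
    inner_neg_left, inner_mul_self, hre, zero_mul, neg_zero]

theorem exp_smul_mul_exp_neg_smul (hnre : n.re = 0) (hnnorm : ‖n‖ = 1) (hmre : m.re = 0)
    (hmnorm : ‖m‖ = 1) (s : ℝ) :
    NormedSpace.exp (s • n) * NormedSpace.exp (-(s • m)) =
      (1/2 : ℝ) • (1 - n * m) + Real.cos (2 * s) • ((1/2 : ℝ) • (1 + n * m)) +
        Real.sin (2 * s) • ((1/2 : ℝ) • (n - m)) := by
  rw [← neg_smul, exp_smul_of_re_eq_zero_of_norm_eq_one_s16 hnre hnnorm,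
    exp_smul_of_re_eq_zero_of_norm_eq_one_s16 hmre hmnorm, Real.cos_neg, Real.sin_neg, neg_smul,
    ← sub_eq_add_neg]
  simpa only [algebraMap_def] using cos_add_sin_smul_mul_cos_sub_sin_smul s n m

theorem exp_smul_mul_exp_neg_smul_traces_circle (hnre : n.re = 0) (hnnorm : ‖n‖ = 1)
    (hmre : m.re = 0) (hmnorm : ‖m‖ = 1) (hnm : n ≠ m) {p v w : ℍ[ℝ]}
    (hp : p = (1/2 : ℝ) • (1 - n * m)) (hv : v = (1/2 : ℝ) • (1 + n * m))
    (hw : w = (1/2 : ℝ) • (n - m)) (a : ℝ) :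
    (∀ s : ℝ, NormedSpace.exp (s • n) * NormedSpace.exp (-(s • m)) =
        p + Real.cos (2 * s) • v + Real.sin (2 * s) • w) ∧
    ‖v‖ = ‖w‖ ∧ ‖v‖ ≠ 0 ∧ ⟪v, w⟫ = 0 ∧
    v * (a • m) ∈ Submodule.span ℝ ({v, w} : Set ℍ[ℝ]) ∧
    w * (a • m) ∈ Submodule.span ℝ ({v, w} : Set ℍ[ℝ]) := by
  subst hp hv hw
  have hnorm : ‖(1/2 : ℝ) • (1 + n * m)‖ = ‖(1/2 : ℝ) • (n - m)‖ := by
    rw [norm_smul, norm_smul, norm_one_add_mul hnre hnnorm]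
  refine ⟨exp_smul_mul_exp_neg_smul hnre hnnorm hmre hmnorm, hnorm, ?_, ?_,
    mul_smul_mem_span_of_mul_self_eq_neg_one
      (mul_self_eq_neg_one_of_re_eq_zero_of_norm_eq_one hmre hmnorm) a⟩
  · rw [hnorm, norm_smul]
    exact mul_ne_zero (by norm_num) (norm_ne_zero_iff.mpr (sub_ne_zero.mpr hnm))
  · rw [inner_smul_left, inner_smul_right, inner_one_add_mul_sub hnre hnnorm, mul_zero, mul_zero]

theorem norm_eq_abs_of_re_eq_zero {a : ℍ[ℝ]} {c : ℝ} (hre : a.re = 0)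
    (h : a.imI ^ 2 + a.imJ ^ 2 + a.imK ^ 2 = c ^ 2) : ‖a‖ = |c| := by
  rw [norm_eq_sqrt_real_inner, inner_self, normSq_def', ← Real.sqrt_sq_eq_abs, ← h, hre]
  ring_nf

end Quaternion

/-- The chains of the standard CR structure (`a = 1`) through the identity of
`SU(2) ⊂ ℍ`, namely `t ↦ exp(t·q)·exp(-t·c·k)` with `q = M₁i + M₂j + M₃k` and
`c = M₃ - (3/2)P` satisfying the light-like condition `‖q‖² = c²`, trace geometric
circles lying in affine planes whose direction is a complex line for the complex
structure given by right quaternion multiplication by `k`. -/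
theorem standard_chains_are_circles_on_complex_lines
    (M₁ M₂ M₃ P : ℝ)
    (hne : ¬(M₁ = 0 ∧ M₂ = 0 ∧ M₃ = 0))
    (hlight : M₁ ^ 2 + M₂ ^ 2 + M₃ ^ 2 = (M₃ - (3/2) * P) ^ 2)
    (hdeg : ¬(M₁ = 0 ∧ M₂ = 0 ∧ P = 0))
    (q kq n m p v w : ℍ[ℝ]) (r c : ℝ)
    (hq : q = ⟨0, M₁, M₂, M₃⟩) (hkq : kq = ⟨0, 0, 0, 1⟩)
    (hr : r = ‖q‖) (hc : c = M₃ - (3/2) * P)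
    (hn : n = r⁻¹ • q) (hm : m = (c / r) • kq)
    (hp : p = (1/2 : ℝ) • (1 - n * m))
    (hv : v = (1/2 : ℝ) • (1 + n * m))
    (hw : w = (1/2 : ℝ) • (n - m)) :
    (∀ t : ℝ, NormedSpace.exp (t • q) * NormedSpace.exp (-((t * c) • kq)) =
        p + Real.cos (2 * r * t) • v + Real.sin (2 * r * t) • w) ∧
    ‖v‖ = ‖w‖ ∧ ‖v‖ ≠ 0 ∧ ⟪v, w⟫ = 0 ∧
    v * kq ∈ Submodule.span ℝ ({v, w} : Set ℍ[ℝ]) ∧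
    w * kq ∈ Submodule.span ℝ ({v, w} : Set ℍ[ℝ]) := by
  -- `hq` and `hkq` are stated with literals that are `ℍ[ℝ]` only up to unfolding, so `rw` and
  -- `simp` cannot see through them; their components are read off by `rfl` instead.
  obtain ⟨hq_re, hq_i, hq_j, hq_k⟩ : q.re = 0 ∧ q.imI = M₁ ∧ q.imJ = M₂ ∧ q.imK = M₃ := by
    subst hq; exact ⟨rfl, rfl, rfl, rfl⟩
  obtain ⟨hk_re, hk_i, hk_j, hk_k⟩ : kq.re = 0 ∧ kq.imI = 0 ∧ kq.imJ = 0 ∧ kq.imK = 1 := by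
    subst hkq; exact ⟨rfl, rfl, rfl, rfl⟩
  have hq0 : q ≠ 0 := by
    rintro rfl
    simp only [imI_zero, imJ_zero, imK_zero] at hq_i hq_j hq_k
    exact hne ⟨hq_i.symm, hq_j.symm, hq_k.symm⟩
  have hr0 : 0 < r := hr ▸ norm_pos_iff.mpr hq0
  have hrc : r = |c| := hr ▸ norm_eq_abs_of_re_eq_zero hq_re (by rw [hq_i, hq_j, hq_k, hlight, hc])
  have hc0 : c ≠ 0 := abs_pos.mp (hrc ▸ hr0)
  have hmnorm : ‖m‖ = 1 := by
    rw [hm, norm_smul, norm_eq_abs_of_re_eq_zero (c := 1) hk_re (by rw [hk_i, hk_j, hk_k]; ring),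
      Real.norm_eq_abs, abs_div, ← hrc, abs_of_pos hr0, div_self hr0.ne', abs_one, mul_one]
  have hqc : q ≠ c • kq := fun h => hdeg <| by
    have h' := congrArg (fun x : ℍ[ℝ] => (x.imI, x.imJ, x.imK)) h
    simp only [imI_smul, imJ_smul, imK_smul, hq_i, hq_j, hq_k, hk_i, hk_j, hk_k, smul_eq_mul,
      mul_zero, mul_one, Prod.mk.injEq] at h'
    exact ⟨h'.1, h'.2.1, by linarith [h'.2.2]⟩
  have hkm : kq = (r / c) • m := by
    rw [hm, smul_smul, div_mul_div_cancel₀ hc0, div_self hr0.ne', one_smul]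
  obtain ⟨hexp, hvw, hv0, hinner, hvk, hwk⟩ :=
    exp_smul_mul_exp_neg_smul_traces_circle (by simp [hn, hq_re])
      (hn ▸ hr ▸ norm_smul_inv_norm hq0) (by simp [hm, hk_re]) hmnorm
      (hn ▸ hm ▸ inv_smul_ne_div_smul hr0.ne' hqc) hp hv hw (r / c)
  refine ⟨fun t => ?_, hvw, hv0, hinner, hkm ▸ hvk, hkm ▸ hwk⟩
  have htq : t • q = (r * t) • n := by
    rw [hn, smul_smul, mul_right_comm, mul_inv_cancel₀ hr0.ne', one_mul]
  have htk : (t * c) • kq = (r * t) • m := by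
    rw [hkm, smul_smul]
    field_simp
  rw [htq, htk, hexp, mul_assoc]
end
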